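/- arXiv:1208.4090 — 7 statements merged into one kernel-verified Lean document; each statement's English description precedes it below -/
import Mathlib

section
/- If η : ℤ → A is a bi-infinite word over a finite alphabet A and there exists n ≥ 1 such that the number of distinct factors of length n in η is at most n, then η is periodic: there exists m ≥ 1 with η(x + m) = η(x) for all x ∈ ℤ. -/
/-!
If the number `P(n)` of factors of length `n` never stops growing, then `P(n) ≥ n + 1` for all
`n`, since `P(0) = 1`. So `P(k + 1) ≤ P(k)` for some `k`, and as restricting a factor of length
`k + 1` to its first or last `k` letters maps onto the factors of length `k`, both restrictions are
injective on factors. Hence two positions carry the same factor of length `k + 1` if and only if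
the positions one step to the right do. By pigeonhole the factor at some position `a` recurs at
`a + p`, `p ≥ 1`, and the shift invariance propagates this to every position, so `η` has period `p`.
-/

open Set Function

theorem Set.eq_of_comp_eq_of_ncard_range_le {ι β γ : Type*} {F : ι → β} (hF : (range F).Finite)
    {g : β → γ} (hcard : (range F).ncard ≤ (range (g ∘ F)).ncard) {i j : ι}
    (hij : g (F i) = g (F j)) : F i = F j := by
  have himage : (g '' range F).ncard = (range F).ncard := by
    rw [← range_comp]
    exact le_antisymm (range_comp g F ▸ ncard_image_le hF) hcard
  exact injOn_of_ncard_image_eq himage hF (mem_range_self i) (mem_range_self j) hij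

theorem Function.periodic_of_eq_of_add_one_eq_iff {β : Type*} {F : ℤ → β}
    (hF : ∀ m m', F (m + 1) = F (m' + 1) ↔ F m = F m') {a p : ℤ} (hap : F (a + p) = F a) :
    Periodic F p := by
  intro m
  induction m using Int.inductionOn' (b := a) with
  | zero => exact hap
  | succ m _ ih => rwa [add_right_comm, hF]
  | pred m _ ih => rwa [← hF, sub_add_cancel, sub_add_eq_add_sub, sub_add_cancel]

theorem Function.exists_periodic_of_add_one_eq_iff {β : Type*} [Finite β] {F : ℤ → β}
    (hF : ∀ m m', F (m + 1) = F (m' + 1) ↔ F m = F m') : ∃ p : ℤ, 1 ≤ p ∧ Periodic F p := by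
  obtain ⟨a, b, hab, heq⟩ := Finite.exists_ne_map_eq_of_infinite F
  rcases hab.lt_or_gt with hlt | hlt
  · exact ⟨b - a, by omega, periodic_of_eq_of_add_one_eq_iff hF (by rw [add_sub_cancel, heq])⟩
  · exact ⟨a - b, by omega, periodic_of_eq_of_add_one_eq_iff hF (by rw [add_sub_cancel, heq])⟩

namespace MorseHedlund

variable {A : Type*} (η : ℤ → A)

def factor (n : ℕ) (m : ℤ) : Fin n → A := fun i => η (m + i)

noncomputable def complexity (n : ℕ) : ℕ := (range (factor η n)).ncard

theorem init_comp_factor (k : ℕ) : Fin.init ∘ factor η (k + 1) = factor η k := by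
  funext m i
  simp [factor, Fin.init]

theorem tail_comp_factor (k : ℕ) : Fin.tail ∘ factor η (k + 1) = factor η k ∘ (· + 1) := by
  funext m i
  simp only [comp_apply, factor, Fin.tail, Fin.val_succ]
  push_cast
  ring_nf

theorem complexity_zero : complexity η 0 = 1 := by
  rw [complexity, ncard_eq_one]
  exact ⟨factor η 0 0, range_eq_singleton_iff.mpr fun _ => Subsingleton.elim _ _⟩

theorem exists_complexity_succ_le {n : ℕ} (hn : complexity η n ≤ n) :
    ∃ k, complexity η (k + 1) ≤ complexity η k := by
  by_contra! hgrow
  have hlower : ∀ k, k + 1 ≤ complexity η k := by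
    intro k
    induction k with
    | zero => rw [complexity_zero]
    | succ k ih => exact (hgrow k).trans_le' ih
  exact absurd (hlower n) (by omega)

variable [Finite A] {η} {k : ℕ} (hk : complexity η (k + 1) ≤ complexity η k)
include hk

theorem factor_eq_iff_factor_succ_eq {m m' : ℤ} :
    factor η k m = factor η k m' ↔ factor η (k + 1) m = factor η (k + 1) m' := by
  refine ⟨fun h => ?_, fun h => by rw [← init_comp_factor, comp_apply, comp_apply, h]⟩
  refine eq_of_comp_eq_of_ncard_range_le (toFinite _) (g := Fin.init) ?_ ?_
  · rwa [init_comp_factor]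
  · simpa only [← comp_apply (f := Fin.init), init_comp_factor] using h

theorem factor_add_one_eq_iff_factor_succ_eq {m m' : ℤ} :
    factor η k (m + 1) = factor η k (m' + 1) ↔ factor η (k + 1) m = factor η (k + 1) m' := by
  have hshift : ∀ m, Fin.tail (factor η (k + 1) m) = factor η k (m + 1) :=
    congrFun (tail_comp_factor η k)
  refine ⟨fun h => ?_, fun h => by rw [← hshift, ← hshift, h]⟩
  refine eq_of_comp_eq_of_ncard_range_le (toFinite _) (g := Fin.tail) ?_ ?_
  · rwa [tail_comp_factor, (add_right_surjective (1 : ℤ)).range_comp]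
  · simpa only [hshift] using h

theorem periodic_of_complexity_succ_le : ∃ p : ℤ, 1 ≤ p ∧ Periodic η p := by
  have hshift : ∀ m m', factor η (k + 1) (m + 1) = factor η (k + 1) (m' + 1) ↔
      factor η (k + 1) m = factor η (k + 1) m' := fun m m' => by
    rw [← factor_eq_iff_factor_succ_eq hk, factor_add_one_eq_iff_factor_succ_eq hk]
  obtain ⟨p, hp, hper⟩ := exists_periodic_of_add_one_eq_iff hshift
  exact ⟨p, hp, fun x => by simpa [factor] using congrFun (hper x) 0⟩

end MorseHedlund

open MorseHedlund in
/-- **Morse–Hedlund theorem over `ℤ`.** If for some `n ≥ 1` the number of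
distinct factors of length `n` of `η : ℤ → A` is at most `n`, then `η` is
periodic. -/
theorem morse_hedlund_int {A : Type*} [Finite A] (η : ℤ → A)
    (h : ∃ n : ℕ, 1 ≤ n ∧
      (Set.range fun m : ℤ => fun i : Fin n => η (m + (i : ℤ))).ncard ≤ n) :
    ∃ m : ℤ, 1 ≤ m ∧ ∀ x : ℤ, η (x + m) = η x := by
  obtain ⟨n, -, hn⟩ := h
  obtain ⟨k, hk⟩ := exists_complexity_succ_le η hn
  exact periodic_of_complexity_succ_le hk
end

section
/- If f : {a, a+1, …, a+i-1} → A is a finite word, n₀ ≥ 1 satisfies P_f(n₀) ≤ n₀, and i > 3n₀, then the restriction of f to {a+n₀, a+n₀+1, …, a+i-n₀} is periodic with period at most n₀. -/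
/-!
Let `P(n)` count the length-`n` factors of `f` read at the positions `m` with `a ≤ m ≤ a + i - n₀`.
Dropping the last letter maps the factors of length `n + 1` onto those of length `n`, so `P` is
monotone; since `P(0) = 1` and `P(n₀) ≤ n₀`, some `n < n₀` has `P(n) = P(n + 1)`. Then every
length-`n` factor has a unique right extension, so `f` is determined, from left to right, by any
`n` consecutive letters. By pigeonhole two of the `n₀ + 1` factors of length `n` starting in
`[a, a + n₀]` coincide, at distance `p ≤ n₀`, and unique extension propagates this coincidence to
all of `[a + n₀, a + i - n₀]`.
-/

lemma Monotone.exists_apply_eq_apply_succ {g : ℕ → ℕ} (hg : Monotone g) {N : ℕ}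
    (hN : g N < g 0 + N) : ∃ n < N, g n = g (n + 1) := by
  induction N with
  | zero => omega
  | succ N ih =>
    by_cases hstep : g N = g (N + 1)
    · exact ⟨N, N.lt_succ_self, hstep⟩
    · have : g N < g (N + 1) := lt_of_le_of_ne (hg N.le_succ) hstep
      obtain ⟨n, hn, heq⟩ := ih (by omega)
      exact ⟨n, by omega, heq⟩

namespace MorseHedlund

open Set

variable {A : Type*} (f : ℤ → A)

def window (n : ℕ) (m : ℤ) : Fin n → A := fun j => f (m + j)

def factorSet (S : Set ℤ) (n : ℕ) : Set (Fin n → A) := window f n '' S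

variable {f}

lemma factorSet_eq_image_init (S : Set ℤ) (n : ℕ) :
    factorSet f S n = Fin.init '' factorSet f S (n + 1) := by
  rw [factorSet, factorSet, image_image]
  rfl

lemma ncard_factorSet_zero {S : Set ℤ} (hS : S.Nonempty) : (factorSet f S 0).ncard = 1 :=
  ncard_eq_one.mpr ⟨_, subsingleton_of_subsingleton.eq_singleton_of_mem
    (mem_image_of_mem (window f 0) hS.some_mem)⟩

variable [Finite A]

lemma monotone_ncard_factorSet (S : Set ℤ) : Monotone fun n => (factorSet f S n).ncard :=
  monotone_nat_of_le_succ fun n => by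
    rw [factorSet_eq_image_init S n]
    exact ncard_image_le (toFinite _)

lemma apply_add_eq_of_window_eq {S : Set ℤ} {n : ℕ}
    (hP : (factorSet f S n).ncard = (factorSet f S (n + 1)).ncard) {m m' : ℤ} (hm : m ∈ S)
    (hm' : m' ∈ S) (hw : window f n m = window f n m') : f (m + n) = f (m' + n) := by
  have hinj : InjOn Fin.init (factorSet f S (n + 1)) :=
    injOn_of_ncard_image_eq (by rw [← factorSet_eq_image_init, hP])
  have := hinj (mem_image_of_mem _ hm) (mem_image_of_mem _ hm') hw
  exact congrFun this (Fin.last n)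

lemma exists_ncard_factorSet_eq_succ {S : Set ℤ} (hS : S.Nonempty) {N : ℕ}
    (hN : (factorSet f S N).ncard ≤ N) :
    ∃ n < N, (factorSet f S n).ncard = (factorSet f S (n + 1)).ncard :=
  (monotone_ncard_factorSet S).exists_apply_eq_apply_succ (by
    simp only [ncard_factorSet_zero hS]
    omega)

lemma exists_window_eq_of_ncard_le {S : Set ℤ} {n N : ℕ} {b : ℤ} (hb : Icc b (b + N) ⊆ S)
    (hN : (factorSet f S n).ncard ≤ N) :
    ∃ m₁ m₂, b ≤ m₁ ∧ m₁ < m₂ ∧ m₂ ≤ b + N ∧ window f n m₁ = window f n m₂ := by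
  have hcard : (factorSet f S n).ncard < (Icc b (b + N)).ncard := by
    rw [← Finset.coe_Icc, ncard_coe_finset, Int.card_Icc]
    omega
  obtain ⟨x, hx, y, hy, hxy, hw⟩ := exists_ne_map_eq_of_ncard_lt_of_maps_to hcard
    (fun m hm => mem_image_of_mem (window f n) (hb hm))
  rcases hxy.lt_or_gt with h | h
  · exact ⟨x, y, hx.1, h, hy.2, hw⟩
  · exact ⟨y, x, hy.1, h, hx.2, hw.symm⟩

lemma apply_add_eq_of_window_eq_add {S : Set ℤ} {n : ℕ}
    (hP : (factorSet f S n).ncard = (factorSet f S (n + 1)).ncard) {m c p : ℤ}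
    (hS : Icc m (c - n) ⊆ S) (hp : 0 ≤ p) (hw : window f n m = window f n (m + p)) :
    ∀ x, m ≤ x → x + p ≤ c → f (x + p) = f x := by
  suffices h : ∀ k : ℕ, m + k + p ≤ c → f (m + k + p) = f (m + k) by
    intro x hx hxc
    obtain ⟨k, rfl⟩ := Int.le.dest hx
    exact h k hxc
  intro k
  induction k using Nat.strong_induction_on with
  | _ k ih =>
    intro hk
    rcases lt_or_ge k n with hkn | hkn
    · have := congrFun hw ⟨k, hkn⟩
      simp only [window] at this
      rw [this, add_right_comm]
    · obtain ⟨t, rfl⟩ := Nat.exists_eq_add_of_le' hkn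
      have hprefix : window f n (m + t) = window f n (m + t + p) := by
        funext j
        have := ih (t + j) (by omega) (by omega)
        simp only [window]
        push_cast at this
        rw [show m + t + p + (j : ℕ) = m + (t + (j : ℕ)) + p by ring, this, add_assoc]
      have hext := apply_add_eq_of_window_eq hP (hS ⟨by omega, by omega⟩) (hS ⟨by omega, by omega⟩)
        hprefix
      calc f (m + ↑(t + n) + p) = f (m + t + p + n) := by push_cast; ring_nf
        _ = f (m + t + n) := hext.symm
        _ = f (m + ↑(t + n)) := by push_cast; ring_nf

end MorseHedlund

open MorseHedlund in
theorem morse_hedlund_finite_general {A : Type*} [Finite A] (f : ℤ → A) (a : ℤ) (i n₀ : ℕ)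
    (hi : 3 * n₀ < i)
    (hP : (Set.ncard {w : Fin n₀ → A | ∃ m : ℤ, a ≤ m ∧ m + (n₀ : ℤ) ≤ a + (i : ℤ) ∧
        ∀ j : Fin n₀, w j = f (m + (j : ℤ))}) ≤ n₀) :
    ∃ p : ℤ, 1 ≤ p ∧ p ≤ (n₀ : ℤ) ∧
      ∀ x : ℤ, a + (n₀ : ℤ) ≤ x → x + p ≤ a + (i : ℤ) - (n₀ : ℤ) → f (x + p) = f x := by
  set S : Set ℤ := {m | a ≤ m ∧ m + n₀ ≤ a + i}
  have hPS : (factorSet f S n₀).ncard ≤ n₀ := by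
    convert hP using 2
    ext w
    simp [S, factorSet, window, funext_iff, eq_comm, and_assoc]
  obtain ⟨n, hn, hplateau⟩ := exists_ncard_factorSet_eq_succ (S := S) ⟨a, le_rfl, by omega⟩ hPS
  obtain ⟨m₁, m₂, hm₁, hlt, hm₂, hw⟩ := exists_window_eq_of_ncard_le (S := S) (b := a)
    (fun m ⟨hlo, hhi⟩ => ⟨hlo, by omega⟩) ((monotone_ncard_factorSet S hn.le).trans hPS)
  refine ⟨m₂ - m₁, by omega, by omega, fun x hx hxp => ?_⟩
  exact apply_add_eq_of_window_eq_add hplateau (c := a + i - n₀)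
    (fun m ⟨hlo, hhi⟩ => ⟨hm₁.trans hlo, by omega⟩) (by omega) (by rwa [add_sub_cancel])
    x (by omega) hxp

/-- **Morse–Hedlund theorem for a finite word.** If `f` is a word on the
interval `{a, a+1, …, a+i-1}`, `n₀ ≥ 1` satisfies `P_f(n₀) ≤ n₀`, and
`i > 3n₀`, then the restriction of `f` to `{a+n₀, …, a+i-n₀}` is periodic of
period at most `n₀`. -/
theorem morse_hedlund_finite {A : Type*} [Finite A] (f : ℤ → A) (a : ℤ) (i n₀ : ℕ)
    (hn₀ : 1 ≤ n₀) (hi : 3 * n₀ < i)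
    (hP : (Set.ncard {w : Fin n₀ → A | ∃ m : ℤ, a ≤ m ∧ m + (n₀ : ℤ) ≤ a + (i : ℤ) ∧
        ∀ j : Fin n₀, w j = f (m + (j : ℤ))}) ≤ n₀) :
    ∃ p : ℤ, 1 ≤ p ∧ p ≤ (n₀ : ℤ) ∧
      ∀ x : ℤ, a + (n₀ : ℤ) ≤ x → x + p ≤ a + (i : ℤ) - (n₀ : ℤ) → f (x + p) = f x :=
  morse_hedlund_finite_general f a i n₀ hi hP
end

section
/- Suppose S ⊂ ℤ² is finite and convex with D_η(S) ≤ 0, and let T be minimal (for inclusion) among nonempty convex subsets of S with discrepancy at most D_η(S). Then every extreme point of T is η-generated by T, and for every extreme point y of T, D_η(T \ {y}) = D_η(T) + 1. -/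
open Classical

namespace Nivat

noncomputable section

/-- Embedding of `ℤ × ℤ` into `ℝ × ℝ`. -/
def e (p : ℤ × ℤ) : ℝ × ℝ := ((p.1 : ℝ), (p.2 : ℝ))

/-- A finite set `S ⊆ ℤ²` is convex if `S = conv(S) ∩ ℤ²`. -/
def IsConvexSet (S : Finset (ℤ × ℤ)) : Prop :=
  ∀ p : ℤ × ℤ, e p ∈ convexHull ℝ (e '' (S : Set (ℤ × ℤ))) → p ∈ S

variable {A : Type*}

/-- The `η`-coloring of `S` induced by the translate by `u`. -/
def pat (η : ℤ × ℤ → A) (S : Finset (ℤ × ℤ)) (u : ℤ × ℤ) : S → A :=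
  fun x => η ((x : ℤ × ℤ) + u)

/-- `P_η(S)`: number of distinct `η`-colorings of `S`. -/
def Pc (η : ℤ × ℤ → A) (S : Finset (ℤ × ℤ)) : ℕ :=
  (Set.range (pat η S)).ncard

/-- Discrepancy `D_η(S) = P_η(S) - |S|`. -/
def Dc (η : ℤ × ℤ → A) (S : Finset (ℤ × ℤ)) : ℤ :=
  (Pc η S : ℤ) - (S.card : ℤ)

/-- Restriction of a coloring of `S` to a subset `T`. -/
def res {S T : Finset (ℤ × ℤ)} (h : T ⊆ S) (f : S → A) : T → A :=
  fun x => f ⟨(x : ℤ × ℤ), h x.2⟩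

/-- A coloring `α` of `T` extends uniquely to an `η`-coloring of `S`. -/
def ExtendsUniquely (η : ℤ × ℤ → A) {T S : Finset (ℤ × ℤ)} (h : T ⊆ S) (α : T → A) : Prop :=
  ∃! β : S → A, β ∈ Set.range (pat η S) ∧ res h β = α

/-- A coloring `α` of `T` has at least two extensions to `η`-colorings of `S`. -/
def ExtendsNonUniquely (η : ℤ × ℤ → A) {T S : Finset (ℤ × ℤ)} (h : T ⊆ S) (α : T → A) : Prop :=
  ∃ β₁ β₂ : S → A, β₁ ∈ Set.range (pat η S) ∧ β₂ ∈ Set.range (pat η S) ∧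
    β₁ ≠ β₂ ∧ res h β₁ = α ∧ res h β₂ = α

theorem eraseSub (S : Finset (ℤ × ℤ)) (x : ℤ × ℤ) : S.erase x ⊆ S :=
  fun _ hy => Finset.mem_of_mem_erase hy

theorem sdiffSub (S T : Finset (ℤ × ℤ)) : S \ T ⊆ S :=
  fun _ hy => (Finset.mem_sdiff.mp hy).1

/-- `x ∈ S` is `η`-generated by `S`: every `η`-coloring of `S \ {x}`
extends uniquely to an `η`-coloring of `S`. -/
def Generated (η : ℤ × ℤ → A) (S : Finset (ℤ × ℤ)) (x : ℤ × ℤ) : Prop :=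
  ∀ α ∈ Set.range (pat η (S.erase x)), ExtendsUniquely η (eraseSub S x) α

/-- `x` is an extreme point of the convex polygon `conv(S)`. -/
def IsExtremePt (S : Finset (ℤ × ℤ)) (x : ℤ × ℤ) : Prop :=
  e x ∈ Set.extremePoints ℝ (convexHull ℝ (e '' (S : Set (ℤ × ℤ))))

/-- A weak `η`-generating set: finite, nonempty, convex, and every extreme
point is `η`-generated. -/
def WeakGenerating (η : ℤ × ℤ → A) (S : Finset (ℤ × ℤ)) : Prop :=
  S.Nonempty ∧ IsConvexSet S ∧ ∀ x ∈ S, IsExtremePt S x → Generated η S x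

/-- An `η`-generating set: weak generating and every nonempty proper convex
subset has strictly larger discrepancy. -/
def Generating (η : ℤ × ℤ → A) (S : Finset (ℤ × ℤ)) : Prop :=
  WeakGenerating η S ∧
    ∀ T ⊆ S, T ≠ S → T.Nonempty → IsConvexSet T → Dc η S < Dc η T

/-- The segment from `e p` to `e q` is a (1-dimensional exposed) boundary edge
of the convex polygon `conv(S)`. -/
def IsEdge (S : Finset (ℤ × ℤ)) (p q : ℤ × ℤ) : Prop :=
  p ≠ q ∧ p ∈ S ∧ q ∈ S ∧ ∃ ℓ : (ℝ × ℝ) →ₗ[ℝ] ℝ, ∃ c : ℝ,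
    (∀ x ∈ convexHull ℝ (e '' (S : Set (ℤ × ℤ))), ℓ x ≤ c) ∧
    {x ∈ convexHull ℝ (e '' (S : Set (ℤ × ℤ))) | ℓ x = c} = segment ℝ (e p) (e q)

/-- An edge of `S`, oriented positively (the set lies to the left of `p → q`). -/
def IsOrientedEdge (S : Finset (ℤ × ℤ)) (p q : ℤ × ℤ) : Prop :=
  IsEdge S p q ∧ ∀ x ∈ S, 0 ≤ (q.1 - p.1) * (x.2 - p.2) - (q.2 - p.2) * (x.1 - p.1)

/-- The lattice points of `S` lying on the edge from `p` to `q`. -/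
def edgePts (S : Finset (ℤ × ℤ)) (p q : ℤ × ℤ) : Finset (ℤ × ℤ) :=
  S.filter (fun x => e x ∈ segment ℝ (e p) (e q))

/-- The rectangle `R_{n,k} = [0,n) × [0,k) ∩ ℤ²`. -/
def Rect (n k : ℕ) : Finset (ℤ × ℤ) :=
  Finset.Ico (0 : ℤ) (n : ℤ) ×ˢ Finset.Ico (0 : ℤ) (k : ℤ)

/-- `η` is aperiodic: no nonzero period vector. -/
def Aperiodic (η : ℤ × ℤ → A) : Prop :=
  ∀ v : ℤ × ℤ, v ≠ 0 → ∃ x : ℤ × ℤ, η (x + v) ≠ η x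

/-- Action of a `2 × 2` integer matrix on `ℤ²`. -/
def Mv (M : Matrix (Fin 2) (Fin 2) ℤ) (p : ℤ × ℤ) : ℤ × ℤ :=
  (M 0 0 * p.1 + M 0 1 * p.2, M 1 0 * p.1 + M 1 1 * p.2)

/-- `u` and `v` are positively parallel (same direction). -/
def PosParallel (u v : ℤ × ℤ) : Prop :=
  ∃ t₁ t₂ : ℤ, 0 < t₁ ∧ 0 < t₂ ∧ t₁ • u = t₂ • v

/-- The directed rational line through the origin with direction `d` is
one-sided `η`-expansive: for some `a, b ∈ ℕ` and `A ∈ SL₂(ℤ)` taking the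
downward `y`-axis to the direction `d`, every `(η ∘ A)`-coloring of
`[0,a] × [-b,b]` extends uniquely to `[0,a] × [-b,b] ∪ {(-1,0)}`. -/
def OneSidedExpansive (η : ℤ × ℤ → A) (d : ℤ × ℤ) : Prop :=
  ∃ a b : ℕ, ∃ M : Matrix (Fin 2) (Fin 2) ℤ, M.det = 1 ∧
    PosParallel (Mv M (0, -1)) d ∧
    ∀ u v : ℤ × ℤ,
      (∀ x : ℤ × ℤ, 0 ≤ x.1 → x.1 ≤ (a : ℤ) → -(b : ℤ) ≤ x.2 → x.2 ≤ (b : ℤ) →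
        η (Mv M (x + u)) = η (Mv M (x + v))) →
      η (Mv M ((-1, 0) + u)) = η (Mv M ((-1, 0) + v))

end

end Nivat

/-!
Every coloring of `T \ {y}` extends to at least one coloring of `T`, so
`P_η(T \ {y}) ≤ P_η(T)` and `D_η(T \ {y}) ≤ D_η(T) + 1`, with equality exactly when
restriction to `T \ {y}` is injective on the colorings of `T`, i.e. when `y` is generated.
For an extreme point `y`, `T \ {y}` is again convex, so minimality of `T` forces
`D_η(T \ {y}) > D_η(S) ≥ D_η(T)`; when `T \ {y}` is empty this holds because `D_η(∅) = 1 > 0`.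
-/

namespace Nivat

lemma e_injective : Function.Injective e := by
  intro p q h
  have h1 : (p.1 : ℝ) = q.1 := congrArg Prod.fst h
  have h2 : (p.2 : ℝ) = q.2 := congrArg Prod.snd h
  exact Prod.ext (by exact_mod_cast h1) (by exact_mod_cast h2)

lemma IsConvexSet.erase {T : Finset (ℤ × ℤ)} {y : ℤ × ℤ} (hT : IsConvexSet T)
    (hy : IsExtremePt T y) : IsConvexSet (T.erase y) := by
  intro p hp
  have hsub : e '' (T.erase y : Set (ℤ × ℤ)) ⊆ e '' (T : Set (ℤ × ℤ)) :=
    Set.image_mono (Finset.coe_subset.mpr (eraseSub T y))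
  refine Finset.mem_erase.mpr ⟨?_, hT p (convexHull_mono hsub hp)⟩
  rintro rfl
  have hnot : e p ∉ convexHull ℝ (convexHull ℝ (e '' (T : Set (ℤ × ℤ))) \ {e p}) :=
    ((convex_convexHull ℝ _).mem_extremePoints_iff_mem_sdiff_convexHull_sdiff.mp hy).2
  refine hnot (convexHull_mono ?_ hp)
  rintro _ ⟨q, hq, rfl⟩
  exact ⟨subset_convexHull ℝ _ ⟨q, (Finset.mem_erase.mp hq).2, rfl⟩,
    fun hqp => (Finset.mem_erase.mp hq).1 (e_injective hqp)⟩

section Colorings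

variable {A : Type*} (η : ℤ × ℤ → A)

lemma image_res_range_pat {T' T : Finset (ℤ × ℤ)} (h : T' ⊆ T) :
    res h '' Set.range (pat η T) = Set.range (pat η T') := by
  rw [← Set.range_comp]
  rfl

lemma Dc_erase {T : Finset (ℤ × ℤ)} {y : ℤ × ℤ} (hy : y ∈ T) :
    Dc η (T.erase y) = Dc η T + 1 - (Pc η T - Pc η (T.erase y) : ℤ) := by
  have hcard : ((T.erase y).card : ℤ) = T.card - 1 := by
    rw [Finset.card_erase_of_mem hy, Nat.cast_sub (Finset.card_pos.mpr ⟨y, hy⟩), Nat.cast_one]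
  rw [Dc, Dc, hcard]
  ring

variable [Finite A]

lemma Pc_mono {T' T : Finset (ℤ × ℤ)} (h : T' ⊆ T) : Pc η T' ≤ Pc η T := by
  rw [Pc, ← image_res_range_pat η h]
  exact Set.ncard_image_le (Set.toFinite _)

lemma one_le_Pc (T : Finset (ℤ × ℤ)) : 1 ≤ Pc η T :=
  (Set.ncard_pos (Set.toFinite _)).mpr ⟨pat η T 0, 0, rfl⟩

lemma Dc_erase_le {T : Finset (ℤ × ℤ)} {y : ℤ × ℤ} (hy : y ∈ T) :
    Dc η (T.erase y) ≤ Dc η T + 1 := by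
  have := Pc_mono η (eraseSub T y)
  rw [Dc_erase η hy]
  omega

lemma generated_of_Dc_erase_eq {T : Finset (ℤ × ℤ)} {y : ℤ × ℤ} (hy : y ∈ T)
    (h : Dc η (T.erase y) = Dc η T + 1) : Generated η T y := by
  have hPc : Pc η (T.erase y) = Pc η T := by
    rw [Dc_erase η hy] at h
    omega
  have hinj : Set.InjOn (res (eraseSub T y)) (Set.range (pat η T)) :=
    Set.injOn_of_ncard_image_eq (by rwa [image_res_range_pat]) (Set.toFinite _)
  rintro _ ⟨u, rfl⟩
  exact ⟨pat η T u, ⟨⟨u, rfl⟩, rfl⟩, fun β ⟨hβ, hres⟩ => hinj hβ ⟨u, rfl⟩ hres⟩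

lemma Dc_lt_Dc_erase_of_minimal {T : Finset (ℤ × ℤ)} {y : ℤ × ℤ} {d : ℤ} (hd : d ≤ 0)
    (hTd : Dc η T ≤ d)
    (hmin : ∀ T' ⊆ T, T'.Nonempty → IsConvexSet T' → Dc η T' ≤ d → T' = T)
    (hT : IsConvexSet T) (hy : y ∈ T) (hext : IsExtremePt T y) :
    Dc η T < Dc η (T.erase y) := by
  rcases (T.erase y).eq_empty_or_nonempty with hempty | hne
  · have hempty_pos : 0 < Dc η ∅ := by
      have := one_le_Pc η ∅
      simp only [Dc, Finset.card_empty]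
      omega
    rw [hempty]
    exact (hTd.trans hd).trans_lt hempty_pos
  · have hgt : d < Dc η (T.erase y) := not_le.mp fun h =>
      Finset.erase_eq_self.mp (hmin _ (eraseSub T y) hne (hT.erase hext) h) hy
    exact hTd.trans_lt hgt

end Colorings

theorem statement4_general {A : Type*} [Finite A] (η : ℤ × ℤ → A) (S T : Finset (ℤ × ℤ))
    (hD : Dc η S ≤ 0)
    (hTconv : IsConvexSet T)
    (hTD : Dc η T ≤ Dc η S)
    (hmin : ∀ T' ⊆ T, T'.Nonempty → IsConvexSet T' → Dc η T' ≤ Dc η S → T' = T) :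
    (∀ y ∈ T, IsExtremePt T y → Generated η T y) ∧
      (∀ y ∈ T, IsExtremePt T y → Dc η (T.erase y) = Dc η T + 1) := by
  have hDc : ∀ y ∈ T, IsExtremePt T y → Dc η (T.erase y) = Dc η T + 1 := fun y hy hext =>
    le_antisymm (Dc_erase_le η hy) (Dc_lt_Dc_erase_of_minimal η hD hTD hmin hTconv hy hext)
  exact ⟨fun y hy hext => generated_of_Dc_erase_eq η hy (hDc y hy hext), hDc⟩

/-- If `S` is finite convex with `D_η(S) ≤ 0` and `T` is minimal (for
inclusion) among nonempty convex subsets of `S` with discrepancy at most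
`D_η(S)`, then every extreme point of `T` is `η`-generated by `T`, and
removing any extreme point raises the discrepancy by exactly `1`. -/
theorem statement4 {A : Type*} [Finite A] (η : ℤ × ℤ → A) (S T : Finset (ℤ × ℤ))
    (hSconv : IsConvexSet S) (hD : Dc η S ≤ 0)
    (hTS : T ⊆ S) (hTne : T.Nonempty) (hTconv : IsConvexSet T)
    (hTD : Dc η T ≤ Dc η S)
    (hmin : ∀ T' ⊆ T, T'.Nonempty → IsConvexSet T' → Dc η T' ≤ Dc η S → T' = T) :
    (∀ y ∈ T, IsExtremePt T y → Generated η T y) ∧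
      (∀ y ∈ T, IsExtremePt T y → Dc η (T.erase y) = Dc η T + 1) :=
  statement4_general η S T hD hTconv hTD hmin

end Nivat
end

section
/- Suppose S ⊂ ℤ² is a convex weak η-generating set such that every nonempty proper convex subset of S has strictly larger η-discrepancy, and let w be a boundary edge of S with S \ w nonempty. Then the number of η-colorings of S \ w that extend non-uniquely to η-colorings of S is at most |w ∩ S| − 1. -/
/-! Restriction maps the `η`-colorings of `S` onto those of `T = S \ w`, and a coloring of `T`
that extends non-uniquely has at least two preimages, so `P(T) + N ≤ P(S)`. As `T` is a nonempty
proper convex subset, minimality gives `P(S) - |S| < P(T) - |T| = P(T) - |S| + |w|`, whence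
`N ≤ |w| - 1`. -/

open Classical

theorem Finset.card_image_add_card_filter_one_lt_card_fiber_le {α β : Type*} [DecidableEq β]
    (s : Finset α) (f : α → β) :
    (s.image f).card + ((s.image f).filter fun b => 1 < (s.filter (f · = b)).card).card
      ≤ s.card := by
  calc _ = ∑ b ∈ s.image f, (1 + if 1 < (s.filter (f · = b)).card then 1 else 0) := by
        rw [Finset.sum_add_distrib, Finset.card_filter, Finset.card_eq_sum_ones]
    _ ≤ ∑ b ∈ s.image f, (s.filter (f · = b)).card := by
        refine Finset.sum_le_sum fun b hb => ?_
        obtain ⟨x, hx, rfl⟩ := Finset.mem_image.mp hb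
        have : 0 < (s.filter (f · = f x)).card := Finset.card_pos.mpr ⟨x, by simp [hx]⟩
        split_ifs <;> omega
    _ = s.card := (Finset.card_eq_sum_card_fiberwise fun _ hx => Finset.mem_image_of_mem f hx).symm

theorem Set.ncard_image_add_ncard_le {α β : Type*} {s : Set α} (hs : s.Finite) (f : α → β) :
    (f '' s).ncard + {b | ∃ x y, x ∈ s ∧ y ∈ s ∧ x ≠ y ∧ f x = b ∧ f y = b}.ncard
      ≤ s.ncard := by
  classical
  obtain ⟨t, rfl⟩ := hs.exists_finset_coe
  have hmulti : {b | ∃ x y, x ∈ (t : Set α) ∧ y ∈ (t : Set α) ∧ x ≠ y ∧ f x = b ∧ f y = b}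
      = ↑((t.image f).filter fun b => 1 < (t.filter (f · = b)).card) := by
    ext b
    simp only [Set.mem_ofPred_eq, Finset.coe_filter, Finset.mem_image, Finset.one_lt_card,
      Finset.mem_filter, Finset.mem_coe]
    grind
  rw [← Finset.coe_image, hmulti, Set.ncard_coe_finset, Set.ncard_coe_finset,
    Set.ncard_coe_finset]
  exact Finset.card_image_add_card_filter_one_lt_card_fiber_le t f

namespace Nivat

theorem Pc_add_ncard_extendsNonUniquely_le {A : Type*} {η : ℤ × ℤ → A} {S T : Finset (ℤ × ℤ)}
    (hfin : (Set.range (pat η S)).Finite) (h : T ⊆ S) :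
    Pc η T + {α : T → A | ExtendsNonUniquely η h α}.ncard ≤ Pc η S := by
  have himage : res h '' Set.range (pat η S) = Set.range (pat η T) := by
    rw [← Set.range_comp]
    rfl
  have := Set.ncard_image_add_ncard_le hfin (res h)
  rwa [himage] at this

theorem edgePts_subset (S : Finset (ℤ × ℤ)) (p q : ℤ × ℤ) : edgePts S p q ⊆ S :=
  Finset.filter_subset _ _

theorem left_mem_edgePts {S : Finset (ℤ × ℤ)} {p q : ℤ × ℤ} (h : IsEdge S p q) :
    p ∈ edgePts S p q :=
  Finset.mem_filter.mpr ⟨h.2.1, left_mem_segment ℝ _ _⟩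

/- The edge is the face `ℓ = c` of `conv S` for a supporting functional `ℓ ≤ c`, so `S \ w` lies
in the open half-plane `ℓ < c`, and hence so does its hull. -/
theorem IsConvexSet.sdiff_edgePts {S : Finset (ℤ × ℤ)} (hS : IsConvexSet S) {p q : ℤ × ℤ}
    (hedge : IsEdge S p q) : IsConvexSet (S \ edgePts S p q) := by
  obtain ⟨-, -, -, ℓ, c, hle, hface⟩ := hedge
  have hoff : e '' ↑(S \ edgePts S p q) ⊆ {y | ℓ y < c} := by
    rintro _ ⟨y, hy, rfl⟩
    obtain ⟨hyS, hyw⟩ := Finset.mem_sdiff.mp hy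
    have hyH : e y ∈ convexHull ℝ (e '' (S : Set (ℤ × ℤ))) := subset_convexHull ℝ _ ⟨y, hyS, rfl⟩
    exact (hle _ hyH).lt_of_ne fun hyc => hyw (Finset.mem_filter.mpr ⟨hyS, hface ▸ ⟨hyH, hyc⟩⟩)
  intro x hx
  have hxS : x ∈ S :=
    hS x (convexHull_mono (Set.image_mono (Finset.coe_subset.mpr (sdiffSub S _))) hx)
  have hxc : ℓ (e x) < c := convexHull_min hoff (convex_halfSpace_lt ℓ.isLinear c) hx
  refine Finset.mem_sdiff.mpr ⟨hxS, fun hxw => hxc.ne ?_⟩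
  have hxedge := (Finset.mem_filter.mp hxw).2
  rw [← hface] at hxedge
  exact hxedge.2

/-- If `S` is a convex weak `η`-generating set whose nonempty proper convex
subsets all have strictly larger `η`-discrepancy, and `w` is a boundary edge
of `S` with `S \ w` nonempty, then at most `|w ∩ S| - 1` `η`-colorings of
`S \ w` extend non-uniquely to `η`-colorings of `S`. -/
theorem statement7 {A : Type*} [Finite A] (η : ℤ × ℤ → A) (S : Finset (ℤ × ℤ))
    (hweak : WeakGenerating η S)
    (hmin : ∀ T ⊆ S, T ≠ S → T.Nonempty → IsConvexSet T → Dc η S < Dc η T)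
    (p q : ℤ × ℤ) (hedge : IsEdge S p q)
    (hne : (S \ edgePts S p q).Nonempty) :
    (Set.ncard {α : (S \ edgePts S p q : Finset (ℤ × ℤ)) → A |
        ExtendsNonUniquely η (sdiffSub S (edgePts S p q)) α} : ℤ)
      ≤ ((edgePts S p q).card : ℤ) - 1 := by
  have hwS := edgePts_subset S p q
  have hproper : S \ edgePts S p q ≠ S :=
    (Finset.sdiff_ssubset hwS ⟨p, left_mem_edgePts hedge⟩).ne
  have hdisc := hmin _ (sdiffSub S _) hproper hne (hweak.2.1.sdiff_edgePts hedge)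
  have hcount := Pc_add_ncard_extendsNonUniquely_le (Set.toFinite (Set.range (pat η S)))
    (sdiffSub S (edgePts S p q))
  have hcard := Finset.card_sdiff_of_subset hwS
  have hwle := Finset.card_le_card hwS
  unfold Dc at hdisc
  omega

end Nivat
end

section
/- Fix nonzero vectors v₁, …, v_m ∈ ℤ² and n ∈ ℕ. There exists A ∈ ℕ such that every finite convex set S ⊂ ℤ² containing at least A integer points, all of whose boundary edges are parallel to one of v₁, …, v_m, has a boundary edge containing at least n integer points. -/
open Classical

/-!
Suppose every edge of `conv S` has fewer than `n` lattice points. An edge parallel to `v` then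
has `ℓ¹`-length at most `2 n ‖v‖₁`, since otherwise `x, x + v, …, x + (n - 1) v` all lie on it.
Walk counterclockwise along the boundary from edge to edge. Two edges parallel to the same `vᵢ`
and traversed in the same sense coincide, so the walk closes up after `P ≤ 2 m` edges. A local
maximum of a linear functional along the closed walk is a global maximum on `S`; taking the
functional `s - z` for a vertex `z` of the walk shows `‖s - z‖₁ ≤ 2 · (P × edge length)`, so `S`
lies in a box whose size depends only on `n` and the `vᵢ`.
-/

namespace Nivat

def dot (a b : ℤ × ℤ) : ℤ := a.1 * b.1 + a.2 * b.2

def cross (a b : ℤ × ℤ) : ℤ := a.1 * b.2 - a.2 * b.1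

def l1norm (a : ℤ × ℤ) : ℤ := |a.1| + |a.2|

lemma dot_comm (a b : ℤ × ℤ) : dot a b = dot b a := by
  simp only [dot]; ring

lemma cross_anticomm (a b : ℤ × ℤ) : cross a b = -cross b a := by
  simp only [cross]; ring

@[simp] lemma cross_self (a : ℤ × ℤ) : cross a a = 0 := by
  simp only [cross]; ring

@[simp] lemma dot_zero_right (a : ℤ × ℤ) : dot a 0 = 0 := by
  simp [dot]

@[simp] lemma cross_zero_right (a : ℤ × ℤ) : cross a 0 = 0 := by
  simp [cross]

lemma dot_add_right (a b c : ℤ × ℤ) : dot a (b + c) = dot a b + dot a c := by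
  simp only [dot, Prod.fst_add, Prod.snd_add]; ring

lemma cross_add_right (a b c : ℤ × ℤ) : cross a (b + c) = cross a b + cross a c := by
  simp only [cross, Prod.fst_add, Prod.snd_add]; ring

lemma dot_sub_right (a b c : ℤ × ℤ) : dot a (b - c) = dot a b - dot a c := by
  simp only [dot, Prod.fst_sub, Prod.snd_sub]; ring

lemma cross_sub_right (a b c : ℤ × ℤ) : cross a (b - c) = cross a b - cross a c := by
  simp only [cross, Prod.fst_sub, Prod.snd_sub]; ring

lemma dot_neg_right (a b : ℤ × ℤ) : dot a (-b) = -dot a b := by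
  simp only [dot, Prod.fst_neg, Prod.snd_neg]; ring

lemma cross_neg_right (a b : ℤ × ℤ) : cross a (-b) = -cross a b := by
  simp only [cross, Prod.fst_neg, Prod.snd_neg]; ring

lemma dot_smul_right (a b : ℤ × ℤ) (k : ℤ) : dot a (k • b) = k * dot a b := by
  simp only [dot, Prod.smul_fst, Prod.smul_snd, smul_eq_mul]; ring

lemma cross_smul_right (a b : ℤ × ℤ) (k : ℤ) : cross a (k • b) = k * cross a b := by
  simp only [cross, Prod.smul_fst, Prod.smul_snd, smul_eq_mul]; ring

/- `dot c a` and `cross c a` are the coordinates of `a` in the orthogonal frame `(c, c⊥)`,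
scaled by `dot c c`. -/

lemma dot_self_mul_cross (c a b : ℤ × ℤ) :
    dot c c * cross a b = dot c a * cross c b - cross c a * dot c b := by
  simp only [dot, cross]; ring

lemma dot_self_mul_dot (c a b : ℤ × ℤ) :
    dot c c * dot a b = dot c a * dot c b + cross c a * cross c b := by
  simp only [dot, cross]; ring

/-- Cramer's rule for `r` in the basis `(a, b)`, paired with `c`. -/
lemma cross_mul_dot_eq (a b r c : ℤ × ℤ) :
    cross a b * dot c r = cross r b * dot c a + cross a r * dot c b := by
  simp only [dot, cross]; ring

lemma dot_self_nonneg (a : ℤ × ℤ) : 0 ≤ dot a a := by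
  simp only [dot]; nlinarith [mul_self_nonneg a.1, mul_self_nonneg a.2]

lemma dot_self_eq_zero {a : ℤ × ℤ} : dot a a = 0 ↔ a = 0 := by
  simp only [dot, Prod.ext_iff, Prod.fst_zero, Prod.snd_zero]
  constructor
  · intro h; constructor <;> nlinarith [mul_self_nonneg a.1, mul_self_nonneg a.2]
  · rintro ⟨h1, h2⟩; simp [h1, h2]

lemma dot_self_pos {a : ℤ × ℤ} (ha : a ≠ 0) : 0 < dot a a :=
  (dot_self_nonneg a).lt_of_ne fun h => ha (dot_self_eq_zero.mp h.symm)

lemma eq_zero_of_cross_eq_zero_of_dot_eq_zero {a b : ℤ × ℤ} (ha : a ≠ 0)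
    (hc : cross a b = 0) (hd : dot a b = 0) : b = 0 := by
  have h := dot_self_mul_dot a b b
  rw [hc, hd] at h
  simp only [mul_zero, add_zero] at h
  exact dot_self_eq_zero.mp ((mul_eq_zero.mp h).resolve_left (dot_self_pos ha).ne')

lemma dot_ne_zero_of_cross_eq_zero {a b : ℤ × ℤ} (ha : a ≠ 0) (hb : b ≠ 0)
    (hc : cross a b = 0) : dot a b ≠ 0 :=
  fun hd => hb (eq_zero_of_cross_eq_zero_of_dot_eq_zero ha hc hd)

lemma dot_le_dot_self_of_cross_eq_zero {a b : ℤ × ℤ} (hc : cross a b = 0) (hd : 0 < dot a b)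
    (hle : dot b b ≤ dot a a) : dot a b ≤ dot a a := by
  have h := dot_self_mul_dot a b b
  rw [hc] at h
  nlinarith [dot_self_nonneg a]

lemma sq_l1norm_le (a : ℤ × ℤ) : l1norm a ^ 2 ≤ 2 * dot a a := by
  simp only [l1norm, dot]
  nlinarith [sq_abs a.1, sq_abs a.2, sq_nonneg (|a.1| - |a.2|)]

lemma dot_le_l1norm_mul (a b : ℤ × ℤ) : dot a b ≤ l1norm a * l1norm b := by
  simp only [l1norm, dot]
  have h1 : a.1 * b.1 ≤ |a.1| * |b.1| := by rw [← abs_mul]; exact le_abs_self _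
  have h2 : a.2 * b.2 ≤ |a.2| * |b.2| := by rw [← abs_mul]; exact le_abs_self _
  nlinarith [abs_nonneg a.1, abs_nonneg a.2, abs_nonneg b.1, abs_nonneg b.2]

lemma l1norm_nonneg (a : ℤ × ℤ) : 0 ≤ l1norm a := by
  simp only [l1norm]; positivity

lemma l1norm_add_le (a b : ℤ × ℤ) : l1norm (a + b) ≤ l1norm a + l1norm b := by
  simp only [l1norm, Prod.fst_add, Prod.snd_add]
  linarith [abs_add_le a.1 b.1, abs_add_le a.2 b.2]

lemma l1norm_neg (a : ℤ × ℤ) : l1norm (-a) = l1norm a := by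
  simp [l1norm]

lemma l1norm_smul (k : ℤ) (a : ℤ × ℤ) : l1norm (k • a) = |k| * l1norm a := by
  simp only [l1norm, Prod.smul_fst, Prod.smul_snd, smul_eq_mul, abs_mul]; ring

lemma l1norm_le_two_mul_of_dot_self_le {a b : ℤ × ℤ} (h : dot a a ≤ dot a b) :
    l1norm a ≤ 2 * l1norm b := by
  nlinarith [sq_l1norm_le a, dot_le_l1norm_mul a b, l1norm_nonneg a, l1norm_nonneg b]

lemma e_sub (a b : ℤ × ℤ) : e (a - b) = e a - e b := by
  simp [e]

lemma sameRay_e_of_cross_eq_zero {a b : ℤ × ℤ} (hc : cross a b = 0) (hd : 0 ≤ dot a b) :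
    SameRay ℝ (e a) (e b) := by
  rcases eq_or_ne a 0 with rfl | ha
  · rw [show e 0 = 0 by ext <;> simp [e]]
    exact SameRay.zero_left _
  have haa : (0 : ℝ) < dot a a := by exact_mod_cast dot_self_pos ha
  have h1 : (dot a a : ℝ) * b.1 = dot a b * a.1 := by
    exact_mod_cast (show dot a a * b.1 = dot a b * a.1 by
      simp only [dot, cross] at hc ⊢; linear_combination (-a.2) * hc)
  have h2 : (dot a a : ℝ) * b.2 = dot a b * a.2 := by
    exact_mod_cast (show dot a a * b.2 = dot a b * a.2 by
      simp only [dot, cross] at hc ⊢; linear_combination a.1 * hc)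
  have hb : e b = ((dot a b : ℝ) / dot a a) • e a := by
    ext <;> simp only [e, Prod.smul_fst, Prod.smul_snd, smul_eq_mul] <;> field_simp <;> linarith
  rw [hb]
  exact SameRay.sameRay_nonneg_smul_right _ (div_nonneg (by exact_mod_cast hd) haa.le)

lemma e_mem_segment {x y s : ℤ × ℤ} (hxy : x ≠ y) (hc : cross (y - x) (s - x) = 0)
    (h0 : 0 ≤ dot (y - x) (s - x)) (h1 : dot (y - x) (s - x) ≤ dot (y - x) (y - x)) :
    e s ∈ segment ℝ (e x) (e y) := by
  rw [mem_segment_iff_sameRay, ← e_sub, ← e_sub]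
  have hys : y - s = (y - x) - (s - x) := by abel
  have hpos := dot_self_pos (sub_ne_zero.mpr hxy.symm)
  have hlag := dot_self_mul_dot (y - x) (s - x) (s - x)
  rw [hc] at hlag
  apply sameRay_e_of_cross_eq_zero
  · rw [hys, cross_sub_right, cross_self, cross_anticomm, hc]; ring
  · rw [hys, dot_sub_right, dot_comm (s - x) (y - x)]
    nlinarith

lemma mem_edgePts_of_cross_eq_zero {S : Finset (ℤ × ℤ)} {x y s : ℤ × ℤ} (hS : IsConvexSet S)
    (hx : x ∈ S) (hy : y ∈ S) (hxy : x ≠ y) (hc : cross (y - x) (s - x) = 0)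
    (h0 : 0 ≤ dot (y - x) (s - x)) (h1 : dot (y - x) (s - x) ≤ dot (y - x) (y - x)) :
    s ∈ edgePts S x y := by
  have hseg := e_mem_segment hxy hc h0 h1
  refine Finset.mem_filter.mpr ⟨hS s ?_, hseg⟩
  exact (convex_convexHull ℝ _).segment_subset (subset_convexHull ℝ _ (Set.mem_image_of_mem e hx))
    (subset_convexHull ℝ _ (Set.mem_image_of_mem e hy)) hseg

/-- The point is that `{ℓ < c} ∪ B` is convex. -/
lemma mem_of_mem_convexHull_of_eq {𝕜 E : Type*} [Field 𝕜] [LinearOrder 𝕜]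
    [IsStrictOrderedRing 𝕜] [AddCommGroup E] [Module 𝕜 E] {K B : Set E} {ℓ : E →ₗ[𝕜] 𝕜} {c : 𝕜}
    (hK : ∀ z ∈ K, ℓ z ≤ c) (hB : Convex 𝕜 B) (hBc : ∀ z ∈ B, ℓ z ≤ c)
    (hKB : ∀ z ∈ K, ℓ z = c → z ∈ B) {z : E} (hz : z ∈ convexHull 𝕜 K) (hzc : ℓ z = c) :
    z ∈ B := by
  have hT : Convex 𝕜 ({w | ℓ w < c} ∪ B) := by
    rw [convex_iff_forall_pos]
    intro a ha b hb s t hs ht hst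
    have hval : ℓ (s • a + t • b) = s * ℓ a + t * ℓ b := by simp
    have ha' : ℓ a ≤ c := ha.elim le_of_lt (hBc a)
    have hb' : ℓ b ≤ c := hb.elim le_of_lt (hBc b)
    have hc : s * c + t * c = c := by rw [← add_mul, hst, one_mul]
    rcases ha with ha | ha
    · left
      show ℓ _ < c
      rw [hval]
      linarith [mul_lt_mul_of_pos_left (show ℓ a < c from ha) hs,
        mul_le_mul_of_nonneg_left hb' ht.le]
    rcases hb with hb | hb
    · left
      show ℓ _ < c
      rw [hval]
      linarith [mul_lt_mul_of_pos_left (show ℓ b < c from hb) ht,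
        mul_le_mul_of_nonneg_left ha' hs.le]
    · exact Or.inr (hB ha hb hs.le ht.le hst)
  have hKT : K ⊆ {w | ℓ w < c} ∪ B := fun w hw =>
    if h : ℓ w = c then Or.inr (hKB w hw h) else Or.inl (lt_of_le_of_ne (hK w hw) h)
  exact (convexHull_min hKT hT hz).resolve_left (fun h => (ne_of_lt h) hzc)

/-- `x → y` is a counterclockwise boundary edge of `conv S` whose endpoints are the extreme points
of `S` on its line. -/
structure IsCCWEdge (S : Finset (ℤ × ℤ)) (x y : ℤ × ℤ) : Prop where
  tail_mem : x ∈ S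
  head_mem : y ∈ S
  ne : x ≠ y
  cross_nonneg : ∀ s ∈ S, 0 ≤ cross (y - x) (s - x)
  dot_nonneg : ∀ s ∈ S, cross (y - x) (s - x) = 0 → 0 ≤ dot (y - x) (s - x)
  dot_le : ∀ s ∈ S, cross (y - x) (s - x) = 0 → dot (y - x) (s - x) ≤ dot (y - x) (y - x)

namespace IsCCWEdge

variable {S : Finset (ℤ × ℤ)} {x y : ℤ × ℤ}

lemma sub_ne_zero (h : IsCCWEdge S x y) : y - x ≠ 0 :=
  _root_.sub_ne_zero.mpr h.ne.symm

lemma isEdge (h : IsCCWEdge S x y) : IsEdge S x y := by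
  set d := y - x
  let ℓ : (ℝ × ℝ) →ₗ[ℝ] ℝ := (d.2 : ℝ) • LinearMap.fst ℝ ℝ ℝ - (d.1 : ℝ) • LinearMap.snd ℝ ℝ ℝ
  have hℓ : ∀ s, ℓ (e s) = ℓ (e x) - cross d (s - x) := by
    intro s; simp [ℓ, e, cross]; ring
  have hK : ∀ z ∈ e '' (S : Set (ℤ × ℤ)), ℓ z ≤ ℓ (e x) := by
    rintro _ ⟨s, hs, rfl⟩
    have : (0 : ℝ) ≤ cross d (s - x) := by exact_mod_cast h.cross_nonneg s hs
    linarith [hℓ s]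
  have hseg : ∀ z ∈ segment ℝ (e x) (e y), ℓ z = ℓ (e x) := fun z hz =>
    (convex_hyperplane ℓ.isLinear _).segment_subset rfl (by simp [hℓ y, d]) hz
  refine ⟨h.ne, h.tail_mem, h.head_mem, ℓ, ℓ (e x),
    fun z hz => convexHull_min hK (convex_halfSpace_le ℓ.isLinear _) hz, ?_⟩
  ext z
  constructor
  · rintro ⟨hz, hzc⟩
    refine mem_of_mem_convexHull_of_eq hK (convex_segment _ _) (fun w hw => (hseg w hw).le)
      ?_ hz hzc
    rintro _ ⟨s, hs, rfl⟩ hsc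
    have hc : cross d (s - x) = 0 := by
      rw [hℓ] at hsc; exact_mod_cast (by linarith : (cross d (s - x) : ℝ) = 0)
    exact e_mem_segment h.ne hc (h.dot_nonneg s hs hc) (h.dot_le s hs hc)
  · intro hz
    exact ⟨(convex_convexHull ℝ _).segment_subset
      (subset_convexHull ℝ _ (Set.mem_image_of_mem e h.tail_mem))
      (subset_convexHull ℝ _ (Set.mem_image_of_mem e h.head_mem)) hz, hseg z hz⟩

/-- Otherwise `x, x + v, …, x + (n - 1) • v` are `n` lattice points on the edge. -/
lemma dot_self_le_of_card_edgePts_lt (h : IsCCWEdge S x y) (hS : IsConvexSet S) {v : ℤ × ℤ}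
    (hv : cross (y - x) v = 0) (hpos : 0 < dot (y - x) v) {n : ℕ}
    (hn : (edgePts S x y).card < n) : dot (y - x) (y - x) ≤ n * dot (y - x) v := by
  by_contra! hlt
  have hv0 : v ≠ 0 := by rintro rfl; simp at hpos
  have hmem : ∀ j ∈ Finset.range n, x + (j : ℤ) • v ∈ edgePts S x y := by
    intro j hj
    have hj' : (j : ℤ) < n := by exact_mod_cast Finset.mem_range.mp hj
    apply mem_edgePts_of_cross_eq_zero hS h.tail_mem h.head_mem h.ne <;>
      rw [add_sub_cancel_left]
    · rw [cross_smul_right, hv]; ring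
    · rw [dot_smul_right]; positivity
    · rw [dot_smul_right]; nlinarith
  have hinj : Set.InjOn (fun j : ℕ => x + (j : ℤ) • v) (Finset.range n) := fun i _ j _ hij => by
    exact_mod_cast smul_left_injective ℤ hv0 (add_left_cancel hij)
  have := Finset.card_le_card_of_injOn _ hmem hinj
  rw [Finset.card_range] at this
  omega

lemma l1norm_le_of_card_edgePts_lt (h : IsCCWEdge S x y) (hS : IsConvexSet S) {v : ℤ × ℤ}
    (hv0 : v ≠ 0) (hv : cross (y - x) v = 0) {n : ℕ} (hn : (edgePts S x y).card < n) :
    l1norm (y - x) ≤ 2 * n * l1norm v := by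
  obtain ⟨w, hw, hwpos, hwv⟩ :
      ∃ w, cross (y - x) w = 0 ∧ 0 < dot (y - x) w ∧ l1norm w = l1norm v := by
    rcases (dot_ne_zero_of_cross_eq_zero h.sub_ne_zero hv0 hv).lt_or_gt with hneg | hpos
    · exact ⟨-v, by rw [cross_neg_right, hv, neg_zero], by rw [dot_neg_right]; linarith,
        l1norm_neg v⟩
    · exact ⟨v, hv, hpos, rfl⟩
  have := l1norm_le_two_mul_of_dot_self_le (a := y - x) (b := (n : ℤ) • w)
    (by rw [dot_smul_right]; exact h.dot_self_le_of_card_edgePts_lt hS hw hwpos hn)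
  rw [l1norm_smul, abs_of_nonneg (by positivity), hwv] at this
  linarith

lemma eq_of_cross_eq_zero {x' y' : ℤ × ℤ} (h : IsCCWEdge S x y) (h' : IsCCWEdge S x' y')
    (hc : cross (y - x) (y' - x') = 0) (hd : 0 < dot (y - x) (y' - x')) : x = x' ∧ y = y' := by
  set d := y - x with hd_def
  set d' := y' - x' with hd'_def
  have hD : 0 < dot d d := dot_self_pos h.sub_ne_zero
  have hcross : ∀ z, dot d d * cross d' z = dot d d' * cross d z := fun z => by
    rw [dot_self_mul_cross, hc, zero_mul, sub_zero]
  have hdot : ∀ z, dot d d * dot d' z = dot d d' * dot d z := fun z => by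
    rw [dot_self_mul_dot, hc, zero_mul, add_zero]
  have hx : x = x' := by
    have c1 : 0 ≤ cross d (x' - x) := h.cross_nonneg x' h'.tail_mem
    have c2 : 0 ≤ -cross d' (x' - x) := by
      rw [← cross_neg_right, neg_sub]; exact h'.cross_nonneg x h.tail_mem
    have c3 := hcross (x' - x)
    have hc1 : cross d (x' - x) = 0 := by nlinarith
    have hc2 : cross d' (x - x') = 0 := by rw [← neg_sub, cross_neg_right]; nlinarith
    have d1 : 0 ≤ dot d (x' - x) := h.dot_nonneg x' h'.tail_mem hc1
    have d2 : 0 ≤ -dot d' (x' - x) := by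
      rw [← dot_neg_right, neg_sub]; exact h'.dot_nonneg x h.tail_mem hc2
    have d3 := hdot (x' - x)
    have hd1 : dot d (x' - x) = 0 := by nlinarith
    exact (sub_eq_zero.mp (eq_zero_of_cross_eq_zero_of_dot_eq_zero h.sub_ne_zero hc1 hd1)).symm
  subst hx
  refine ⟨rfl, ?_⟩
  have e1 : dot d d' ≤ dot d d := h.dot_le y' h'.head_mem hc
  have e2 : dot d' d ≤ dot d' d' := h'.dot_le y h.head_mem (by rw [cross_anticomm, hc, neg_zero])
  have e3 := hdot d'
  rw [dot_comm d' d] at e2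
  have hk : dot d d' = dot d d := by nlinarith
  have hyy : y' - y = d' - d := by rw [hd_def, hd'_def]; abel
  have := eq_zero_of_cross_eq_zero_of_dot_eq_zero h.sub_ne_zero
    (by rw [hyy, cross_sub_right, hc, cross_self, sub_zero] : cross d (y' - y) = 0)
    (by rw [hyy, dot_sub_right, hk, sub_self] : dot d (y' - y) = 0)
  exact (sub_eq_zero.mp this).symm

/-- Local maxima of a linear functional along the boundary are global maxima. -/
lemma dot_le_of_vertex {w p w' : ℤ × ℤ} (h : IsCCWEdge S w p) (h' : IsCCWEdge S p w')
    {a : ℤ × ℤ} (hw : dot a w ≤ dot a p) (hw' : dot a w' ≤ dot a p) {s : ℤ × ℤ} (hs : s ∈ S) :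
    dot a s ≤ dot a p := by
  have hsw : s - w = (s - p) + (p - w) := by abel
  have hw'w : w' - w = (w' - p) + (p - w) := by abel
  set u := p - w
  set o := w' - p
  have hu : 0 ≤ dot a u := by rw [dot_sub_right]; linarith
  have ho : dot a o ≤ 0 := by rw [dot_sub_right]; linarith
  have h1 := h.cross_nonneg s hs
  rw [hsw, cross_add_right, cross_self, add_zero] at h1
  have h2 := h'.cross_nonneg s hs
  have h3 := h.cross_nonneg w' h'.head_mem
  rw [hw'w, cross_add_right, cross_self, add_zero] at h3
  suffices dot a (s - p) ≤ 0 by rw [dot_sub_right] at this; linarith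
  rcases h3.lt_or_eq with h3 | h3
  · have := cross_mul_dot_eq u o (s - p) a
    rw [cross_anticomm (s - p) o] at this
    nlinarith
  rcases (dot_ne_zero_of_cross_eq_zero h.sub_ne_zero h'.sub_ne_zero h3.symm).lt_or_gt
    with hneg | hpos
  · have hc := dot_self_mul_cross u o (s - p)
    rw [← h3, zero_mul, sub_zero] at hc
    have hor : cross o (s - p) = 0 := by nlinarith [dot_self_pos h.sub_ne_zero]
    have hd := dot_self_mul_dot o a (s - p)
    rw [hor, mul_zero, add_zero, dot_comm o a] at hd
    nlinarith [h'.dot_nonneg s hs hor, dot_self_pos h'.sub_ne_zero]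
  · exact absurd (eq_of_cross_eq_zero h h' h3.symm hpos).1 h.ne

end IsCCWEdge

/-- On the half-plane `0 < cross d w`, the first component is the cotangent of the angle from `d`
to `w`, so a larger key means a smaller angle; ties are broken by length. -/
def angleKey (d w : ℤ × ℤ) : WithBot ℚ ×ₗ ℤ :=
  toLex (if 0 < cross d w then (((dot d w : ℚ) / cross d w : ℚ) : WithBot ℚ) else ⊥, dot w w)

lemma cross_nonneg_of_angleKey_le {d w w' : ℤ × ℤ}
    (hw : 0 < cross d w ∨ cross d w = 0 ∧ dot d w < 0)
    (hw' : 0 < cross d w' ∨ cross d w' = 0 ∧ dot d w' < 0)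
    (h : angleKey d w ≤ angleKey d w') :
    0 ≤ cross w' w ∧ (cross w' w = 0 → 0 ≤ dot w' w ∧ dot w' w ≤ dot w' w') := by
  have hd : d ≠ 0 := by rintro rfl; simp [cross, dot] at hw
  have hD := dot_self_pos hd
  have I1 := dot_self_mul_cross d w' w
  have I2 := dot_self_mul_dot d w' w
  rw [angleKey, angleKey, Prod.Lex.toLex_le_toLex] at h
  rcases hw' with ht' | ⟨ht', hu'⟩ <;> rcases hw with ht | ⟨ht, hu⟩
  · simp only [if_pos ht, if_pos ht', WithBot.coe_lt_coe, WithBot.coe_inj] at h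
    have hq : (dot d w : ℚ) / cross d w ≤ (dot d w' : ℚ) / cross d w' :=
      h.elim le_of_lt fun h => h.1.le
    rw [div_le_div_iff₀ (by exact_mod_cast ht) (by exact_mod_cast ht')] at hq
    have hq' : dot d w * cross d w' ≤ dot d w' * cross d w := by exact_mod_cast hq
    refine ⟨by nlinarith, fun hc => ?_⟩
    have heq : dot d w * cross d w' = dot d w' * cross d w := by nlinarith
    have hlen : dot w w ≤ dot w' w' := by
      have hq_eq : (dot d w : ℚ) / cross d w = (dot d w' : ℚ) / cross d w' := by
        rw [div_eq_div_iff (by exact_mod_cast ht.ne') (by exact_mod_cast ht'.ne')]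
        exact_mod_cast heq
      exact (h.resolve_left (by rw [hq_eq]; exact lt_irrefl _)).2
    have hpos : 0 < dot w' w := by
      have h5 : (dot d w' * dot d w + cross d w' * cross d w) * cross d w =
          cross d w' * (dot d w ^ 2 + cross d w ^ 2) := by
        linear_combination (-(dot d w)) * heq
      have h6 : 0 < dot d w' * dot d w + cross d w' * cross d w :=
        pos_of_mul_pos_left (h5 ▸ by positivity) ht.le
      nlinarith
    exact ⟨hpos.le, dot_le_dot_self_of_cross_eq_zero hc hpos hlen⟩
  · rw [ht] at I1
    refine ⟨by nlinarith, fun hc => ?_⟩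
    nlinarith
  · simp [if_pos ht, ht'] at h
  · rw [ht, ht'] at I1 I2
    simp only [ht, ht', lt_self_iff_false, if_false, true_and] at h
    have hc : cross w' w = 0 := by nlinarith
    have hpos : 0 < dot w' w := by nlinarith
    refine ⟨hc.ge, fun _ => ⟨hpos.le, dot_le_dot_self_of_cross_eq_zero hc hpos ?_⟩⟩
    simpa using h

/-- The edge leaving `x` is the one making the smallest angle with `d`. -/
lemma exists_isCCWEdge_of_halfPlane {S : Finset (ℤ × ℤ)} {x d : ℤ × ℤ} (hx : x ∈ S)
    (hS : ∃ s ∈ S, s ≠ x)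
    (hd : ∀ s ∈ S, s ≠ x → 0 < cross d (s - x) ∨ cross d (s - x) = 0 ∧ dot d (s - x) < 0) :
    ∃ y, IsCCWEdge S x y := by
  obtain ⟨s₀, hs₀, hs₀x⟩ := hS
  obtain ⟨y, hy, hmax⟩ := (S.erase x).exists_max_image (fun s => angleKey d (s - x))
    ⟨s₀, Finset.mem_erase.mpr ⟨hs₀x, hs₀⟩⟩
  obtain ⟨hyx, hyS⟩ := Finset.mem_erase.mp hy
  have key : ∀ s ∈ S, 0 ≤ cross (y - x) (s - x) ∧ (cross (y - x) (s - x) = 0 →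
      0 ≤ dot (y - x) (s - x) ∧ dot (y - x) (s - x) ≤ dot (y - x) (y - x)) := by
    intro s hs
    by_cases hsx : s = x
    · subst hsx
      simp [dot_self_nonneg]
    · exact cross_nonneg_of_angleKey_le (hd s hs hsx) (hd y hyS hyx)
        (hmax s (Finset.mem_erase.mpr ⟨hsx, hs⟩))
  exact ⟨y, hx, hyS, Ne.symm hyx, fun s hs => (key s hs).1, fun s hs hc => ((key s hs).2 hc).1,
    fun s hs hc => ((key s hs).2 hc).2⟩

lemma exists_isCCWEdge {S : Finset (ℤ × ℤ)} (hS : 1 < S.card) : ∃ x y, IsCCWEdge S x y := by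
  obtain ⟨z, hz, hmax⟩ := S.exists_max_image (fun p : ℤ × ℤ => toLex p)
    (Finset.card_pos.mp (by omega))
  obtain ⟨s₀, hs₀, hs₀z⟩ := Finset.exists_mem_ne hS z
  refine ⟨z, exists_isCCWEdge_of_halfPlane (d := (0, 1)) hz ⟨s₀, hs₀, hs₀z⟩ fun s hs hsz => ?_⟩
  have hlt := (hmax s hs).lt_of_ne (by simpa using hsz)
  rw [Prod.Lex.lt_iff] at hlt
  simp only [cross, dot, Prod.fst_sub, Prod.snd_sub, ofLex_toLex] at hlt ⊢
  omega

lemma IsCCWEdge.exists_next {S : Finset (ℤ × ℤ)} {x y : ℤ × ℤ} (h : IsCCWEdge S x y) :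
    ∃ y', IsCCWEdge S y y' := by
  refine exists_isCCWEdge_of_halfPlane (d := y - x) h.head_mem ⟨x, h.tail_mem, h.ne⟩
    fun s hs hsy => ?_
  have hsplit : s - x = (s - y) + (y - x) := by abel
  have h1 := h.cross_nonneg s hs
  rw [hsplit, cross_add_right, cross_self, add_zero] at h1
  rcases h1.lt_or_eq with h1 | h1
  · exact Or.inl h1
  refine Or.inr ⟨h1.symm, ?_⟩
  have hc : cross (y - x) (s - x) = 0 := by rw [hsplit, cross_add_right, cross_self]; omega
  have h2 := h.dot_le s hs hc
  rw [hsplit, dot_add_right] at h2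
  have h3 : dot (y - x) (s - y) ≠ 0 := fun h0 => hsy (sub_eq_zero.mp
    (eq_zero_of_cross_eq_zero_of_dot_eq_zero h.sub_ne_zero h1.symm h0))
  omega

section BoundaryWalk

variable {S : Finset (ℤ × ℤ)}

/-- One step of the counterclockwise walk along the boundary; an edge is a pair `(tail, head)`. -/
noncomputable def nextEdge (S : Finset (ℤ × ℤ)) (p : (ℤ × ℤ) × (ℤ × ℤ)) :
    (ℤ × ℤ) × (ℤ × ℤ) :=
  (p.2, if h : ∃ y, IsCCWEdge S p.2 y then h.choose else p.2)

lemma isCCWEdge_nextEdge {p : (ℤ × ℤ) × (ℤ × ℤ)} (h : IsCCWEdge S p.1 p.2) :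
    IsCCWEdge S (nextEdge S p).1 (nextEdge S p).2 := by
  have hex := h.exists_next
  simp only [nextEdge, dif_pos hex]
  exact hex.choose_spec

lemma isCCWEdge_iterate_nextEdge {p : (ℤ × ℤ) × (ℤ × ℤ)} (h : IsCCWEdge S p.1 p.2) (k : ℕ) :
    IsCCWEdge S ((nextEdge S)^[k] p).1 ((nextEdge S)^[k] p).2 := by
  induction k with
  | zero => exact h
  | succ k ih => rw [Function.iterate_succ_apply']; exact isCCWEdge_nextEdge ih

lemma fst_iterate_succ_nextEdge (p : (ℤ × ℤ) × (ℤ × ℤ)) (k : ℕ) :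
    ((nextEdge S)^[k + 1] p).1 = ((nextEdge S)^[k] p).2 := by
  rw [Function.iterate_succ_apply']; rfl

noncomputable def ccwEdges (S : Finset (ℤ × ℤ)) : Finset ((ℤ × ℤ) × (ℤ × ℤ)) :=
  (S ×ˢ S).filter fun p => IsCCWEdge S p.1 p.2

lemma mem_ccwEdges {p : (ℤ × ℤ) × (ℤ × ℤ)} : p ∈ ccwEdges S ↔ IsCCWEdge S p.1 p.2 := by
  simp only [ccwEdges, Finset.mem_filter, Finset.mem_product, and_iff_right_iff_imp]
  exact fun h => ⟨h.tail_mem, h.head_mem⟩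

lemma cross_eq_zero_and_dot_pos_of_parallel {a b v : ℤ × ℤ} (hv : v ≠ 0) (ha : a ≠ 0)
    (hb : b ≠ 0) (hav : cross a v = 0) (hbv : cross b v = 0) (hsign : 0 < dot a v ↔ 0 < dot b v) :
    cross a b = 0 ∧ 0 < dot a b := by
  have hva : cross v a = 0 := by rw [cross_anticomm, hav, neg_zero]
  have hvb : cross v b = 0 := by rw [cross_anticomm, hbv, neg_zero]
  have I1 := dot_self_mul_cross v a b
  have I2 := dot_self_mul_dot v a b
  rw [hva, hvb, dot_comm v a, dot_comm v b] at I1 I2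
  have hV := dot_self_pos hv
  have hna := dot_ne_zero_of_cross_eq_zero ha hv hav
  have hnb := dot_ne_zero_of_cross_eq_zero hb hv hbv
  refine ⟨by nlinarith, ?_⟩
  have : 0 < dot a v * dot b v := by
    rcases hna.lt_or_gt with h | h
    · exact mul_pos_of_neg_of_neg h (hnb.lt_or_gt.resolve_right fun h' => (hsign.mpr h').not_gt h)
    · exact mul_pos h (hsign.mp h)
  nlinarith

/-- Two edges parallel to the same `v i` and traversed in the same sense coincide. -/
lemma card_ccwEdges_le {m : ℕ} {v : Fin m → ℤ × ℤ} (hv : ∀ i, v i ≠ 0)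
    (hdir : ∀ x y, IsCCWEdge S x y → ∃ i, cross (y - x) (v i) = 0) :
    (ccwEdges S).card ≤ 2 * m := by
  let IsOfClass : (ℤ × ℤ) × (ℤ × ℤ) → Fin m × Bool → Prop := fun p c =>
    cross (p.2 - p.1) (v c.1) = 0 ∧ (0 < dot (p.2 - p.1) (v c.1) ↔ c.2)
  calc (ccwEdges S).card ≤ (Finset.univ : Finset (Fin m × Bool)).card := by
        refine Finset.card_le_card_of_forall_subsingleton IsOfClass (fun p hp => ?_) ?_
        · obtain ⟨i, hi⟩ := hdir _ _ (mem_ccwEdges.mp hp)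
          exact ⟨(i, decide (0 < dot (p.2 - p.1) (v i))), Finset.mem_univ _, hi, by simp⟩
        · rintro c - p ⟨hp, hpc, hps⟩ q ⟨hq, hqc, hqs⟩
          have hp' := mem_ccwEdges.mp hp
          have hq' := mem_ccwEdges.mp hq
          obtain ⟨hc, hd⟩ := cross_eq_zero_and_dot_pos_of_parallel (hv c.1) hp'.sub_ne_zero
            hq'.sub_ne_zero hpc hqc (hps.trans hqs.symm)
          obtain ⟨h1, h2⟩ := hp'.eq_of_cross_eq_zero hq' hc hd
          exact Prod.ext h1 h2
    _ = 2 * m := by simp [mul_comm]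

lemma exists_isPeriodicPt_nextEdge {p : (ℤ × ℤ) × (ℤ × ℤ)} (hp : IsCCWEdge S p.1 p.2) {K : ℕ}
    (hK : (ccwEdges S).card ≤ K) :
    ∃ q P, IsCCWEdge S q.1 q.2 ∧ 0 < P ∧ P ≤ K ∧ Function.IsPeriodicPt (nextEdge S) P q := by
  have hmaps : Set.MapsTo (fun k => (nextEdge S)^[k] p) (Finset.range (K + 1)) (ccwEdges S) :=
    fun k _ => mem_ccwEdges.mpr (isCCWEdge_iterate_nextEdge hp k)
  obtain ⟨i, hi, j, hj, hij, heq⟩ :=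
    Finset.exists_ne_map_eq_of_card_lt_of_maps_to (by simpa using Nat.lt_succ_of_le hK) hmaps
  wlog hlt : i < j generalizing i j
  · exact this j hj i hi hij.symm heq.symm (by omega)
  rw [Finset.mem_range] at hj
  refine ⟨(nextEdge S)^[i] p, j - i, isCCWEdge_iterate_nextEdge hp i, by omega, by omega, ?_⟩
  show (nextEdge S)^[j - i] ((nextEdge S)^[i] p) = (nextEdge S)^[i] p
  rw [← Function.iterate_add_apply, Nat.sub_add_cancel hlt.le]
  exact heq.symm

variable {q : (ℤ × ℤ) × (ℤ × ℤ)} {P : ℕ}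

lemma exists_dot_le_of_isPeriodicPt (hq : IsCCWEdge S q.1 q.2) (hP : 0 < P)
    (hper : Function.IsPeriodicPt (nextEdge S) P q) (a : ℤ × ℤ) {s : ℤ × ℤ} (hs : s ∈ S) :
    ∃ r < P, dot a s ≤ dot a ((nextEdge S)^[r] q).1 := by
  obtain ⟨r, hr, hmax⟩ := (Finset.range P).exists_max_image
    (fun k => dot a ((nextEdge S)^[k] q).1) ⟨0, Finset.mem_range.mpr hP⟩
  have hmax' : ∀ k, dot a ((nextEdge S)^[k] q).1 ≤ dot a ((nextEdge S)^[r] q).1 := fun k => by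
    rw [← hper.iterate_mod_apply k]
    exact hmax _ (Finset.mem_range.mpr (Nat.mod_lt _ hP))
  have hback : ((nextEdge S)^[r + P - 1] q).2 = ((nextEdge S)^[r] q).1 := by
    rw [← fst_iterate_succ_nextEdge, Nat.sub_add_cancel (by omega), Function.iterate_add_apply,
      hper.eq]
  have hprev := isCCWEdge_iterate_nextEdge hq (r + P - 1)
  rw [hback] at hprev
  refine ⟨r, Finset.mem_range.mp hr, hprev.dot_le_of_vertex (isCCWEdge_iterate_nextEdge hq r)
    (hmax' _) ?_ hs⟩
  rw [← fst_iterate_succ_nextEdge]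
  exact hmax' _

lemma l1norm_iterate_sub_le (hq : IsCCWEdge S q.1 q.2) {C : ℤ}
    (hC : ∀ x y, IsCCWEdge S x y → l1norm (y - x) ≤ C) (k : ℕ) :
    l1norm (((nextEdge S)^[k] q).1 - q.1) ≤ k * C := by
  induction k with
  | zero => simp [l1norm]
  | succ k ih =>
    have hsplit : ((nextEdge S)^[k + 1] q).1 - q.1 =
        (((nextEdge S)^[k] q).2 - ((nextEdge S)^[k] q).1) + (((nextEdge S)^[k] q).1 - q.1) := by
      rw [fst_iterate_succ_nextEdge]; abel
    rw [hsplit]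
    have := hC _ _ (isCCWEdge_iterate_nextEdge hq k)
    push_cast
    linarith [l1norm_add_le (((nextEdge S)^[k] q).2 - ((nextEdge S)^[k] q).1)
      (((nextEdge S)^[k] q).1 - q.1)]

/-- For `a = s - q.1`, some vertex `p` of the closed walk has `dot a a ≤ dot a (p - q.1)`,
and `p` is fewer than `P` edges away from `q.1`. -/
lemma l1norm_sub_le_of_isPeriodicPt (hq : IsCCWEdge S q.1 q.2) (hP : 0 < P)
    (hper : Function.IsPeriodicPt (nextEdge S) P q) {C : ℤ}
    (hC : ∀ x y, IsCCWEdge S x y → l1norm (y - x) ≤ C) {s : ℤ × ℤ} (hs : s ∈ S) :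
    l1norm (s - q.1) ≤ 2 * (P * C) := by
  obtain ⟨r, hr, hle⟩ := exists_dot_le_of_isPeriodicPt hq hP hper (s - q.1) hs
  have h1 : dot (s - q.1) (s - q.1) ≤ dot (s - q.1) (((nextEdge S)^[r] q).1 - q.1) := by
    rw [dot_sub_right, dot_sub_right]; linarith
  have hC0 : 0 ≤ C := (l1norm_nonneg _).trans (hC _ _ hq)
  have hrP : (r : ℤ) * C ≤ P * C := mul_le_mul_of_nonneg_right (by exact_mod_cast hr.le) hC0
  linarith [l1norm_le_two_mul_of_dot_self_le h1, l1norm_iterate_sub_le hq hC r]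

end BoundaryWalk

lemma card_le_of_l1norm_sub_le {S : Finset (ℤ × ℤ)} {z : ℤ × ℤ} {R : ℤ}
    (h : ∀ s ∈ S, l1norm (s - z) ≤ R) : S.card ≤ (2 * R + 1).toNat ^ 2 := by
  have hsub : S ⊆ Finset.Icc (z.1 - R) (z.1 + R) ×ˢ Finset.Icc (z.2 - R) (z.2 + R) := by
    intro s hs
    have hR := h s hs
    simp only [l1norm, Prod.fst_sub, Prod.snd_sub] at hR
    simp only [Finset.mem_product, Finset.mem_Icc]
    have := abs_nonneg (s.1 - z.1)
    have := abs_nonneg (s.2 - z.2)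
    refine ⟨⟨?_, ?_⟩, ?_, ?_⟩ <;>
      linarith [le_abs_self (s.1 - z.1), neg_abs_le (s.1 - z.1), le_abs_self (s.2 - z.2),
        neg_abs_le (s.2 - z.2)]
  have hlen : ∀ t : ℤ, t + R + 1 - (t - R) = 2 * R + 1 := fun t => by ring
  calc S.card ≤ _ := Finset.card_le_card hsub
    _ = (2 * R + 1).toNat ^ 2 := by rw [Finset.card_product, Int.card_Icc, Int.card_Icc, hlen,
      hlen, sq]

/-- Fix nonzero `v₁, …, v_m ∈ ℤ²` and `n ∈ ℕ`. There exists `N ∈ ℕ` such that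
any finite convex `S ⊂ ℤ²` with at least `N` lattice points, all of whose
boundary edges are parallel to one of the `vᵢ`, has a boundary edge containing
at least `n` lattice points. -/
theorem statement9 (m : ℕ) (v : Fin m → ℤ × ℤ) (hv : ∀ i, v i ≠ 0) (n : ℕ) :
    ∃ N : ℕ, ∀ S : Finset (ℤ × ℤ), IsConvexSet S → N ≤ S.card →
      (∀ p q : ℤ × ℤ, IsEdge S p q →
        ∃ i : Fin m, (q.1 - p.1) * (v i).2 = (q.2 - p.2) * (v i).1) →
      ∃ p q : ℤ × ℤ, IsEdge S p q ∧ n ≤ (edgePts S p q).card := by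
  set C : ℤ := 2 * n * ∑ i, l1norm (v i)
  have hC0 : 0 ≤ C := mul_nonneg (by positivity) (Finset.sum_nonneg fun i _ => l1norm_nonneg _)
  refine ⟨(2 * (2 * (2 * m * C)) + 1).toNat ^ 2 + 1, fun S hS hcard hdir => ?_⟩
  by_contra! hshort
  have hpar : ∀ x y, IsCCWEdge S x y → ∃ i, cross (y - x) (v i) = 0 := fun x y h => by
    obtain ⟨i, hi⟩ := hdir x y h.isEdge
    exact ⟨i, by simp only [cross, Prod.fst_sub, Prod.snd_sub]; linarith⟩
  have hC : ∀ x y, IsCCWEdge S x y → l1norm (y - x) ≤ C := fun x y h => by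
    obtain ⟨i, hi⟩ := hpar x y h
    calc l1norm (y - x) ≤ 2 * n * l1norm (v i) :=
          h.l1norm_le_of_card_edgePts_lt hS (hv i) hi (hshort x y h.isEdge)
      _ ≤ C := mul_le_mul_of_nonneg_left
        (Finset.single_le_sum (fun j _ => l1norm_nonneg (v j)) (Finset.mem_univ i)) (by positivity)
  have hpos : 1 ≤ (2 * (2 * (2 * m * C)) + 1).toNat ^ 2 := Nat.one_le_pow _ _ (by
    have : 0 ≤ 2 * (m : ℤ) * C := by positivity
    omega)
  obtain ⟨x, y, hxy⟩ := exists_isCCWEdge (S := S) (by omega)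
  obtain ⟨q, P, hq, hP, hPm, hper⟩ :=
    exists_isPeriodicPt_nextEdge (p := (x, y)) hxy (card_ccwEdges_le hv hpar)
  have hbox := card_le_of_l1norm_sub_le fun s hs =>
    (l1norm_sub_le_of_isPeriodicPt hq hP hper hC hs).trans
      (by gcongr; exact_mod_cast hPm : 2 * ((P : ℤ) * C) ≤ 2 * (2 * m * C))
  omega

end Nivat
end

section
/- Suppose η : ℤ² → A admits an η-generating set S, and S′ ⊇ S is any finite set. Then the ℤ²-subshift of finite type X_{S′}(η) generated by the S′-words of η has topological entropy zero; equivalently, lim_{N→∞} (1/N²) log P(N,N) = 0, where P(N,N) counts the N×N patterns occurring in elements of X_{S′}(η). -/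
open Classical

/-!
An extreme point `x` of `S` is the unique maximiser on `S` of some height `K q₁ + q₂`, and it is
`η`-generated. So in every configuration of `X_S(η)` the symbol at `p` is determined by the
symbols at `p + (s - x)`, `s ≠ x`, which all have strictly smaller height. By induction on the
height, the `N × N` patterns are determined by the configuration on a strip of bounded height and
of width `O(N)`, so there are at most `|A| ^ O(N)` of them and `log P(N, N) / N² → 0`.
-/

namespace Nivat

open Filter Topology

theorem exists_nat_forall_le {ι : Type*} (s : Finset ι) (f : ι → ℤ) :
    ∃ n : ℕ, ∀ i ∈ s, f i ≤ n := by
  obtain ⟨n, hn⟩ := (s.image fun i => (f i).toNat).exists_le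
  exact ⟨n, fun i hi => (Int.self_le_toNat (f i)).trans
    (by exact_mod_cast hn _ (Finset.mem_image_of_mem _ hi))⟩

theorem mem_extremePoints_convexHull_of_forall_lt {E : Type*} [AddCommGroup E] [Module ℝ E]
    {B : Set E} {x : E} (l : E →ₗ[ℝ] ℝ) (hx : x ∈ B) (hlt : ∀ y ∈ B, y ≠ x → l y < l x) :
    x ∈ (convexHull ℝ B).extremePoints ℝ := by
  set H := insert x {y | l y < l x}
  have hH : ∀ y ∈ H, l y ≤ l x := by
    rintro y (rfl | h)
    exacts [le_rfl, le_of_lt h]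
  have hconv : Convex ℝ H := by
    have key : ∀ y₁ ∈ H, ∀ y₂, l y₂ < l x → ∀ a b : ℝ, 0 ≤ a → 0 < b → a + b = 1 →
        a • y₁ + b • y₂ ∈ H := fun y₁ h₁ y₂ h₂ a b ha hb hab => by
      refine Or.inr ?_
      simp only [Set.mem_ofPred_eq, map_add, map_smul, smul_eq_mul]
      linarith [mul_le_mul_of_nonneg_left (hH y₁ h₁) ha, mul_lt_mul_of_pos_left h₂ hb,
        congrArg (· * l x) hab]
    rintro y₁ hy₁ y₂ hy₂ a b ha hb hab
    rcases hy₂ with h₂ | h₂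
    · rcases hy₁ with h₁ | h₁
      · exact Or.inl (by rw [h₁, h₂, Convex.combo_self hab])
      rcases ha.eq_or_lt with rfl | ha
      · exact Or.inl (by simp [h₂, show b = 1 by linarith])
      · rw [add_comm]
        exact key y₂ (Or.inl h₂) y₁ h₁ b a hb ha (by linarith)
    · rcases hb.eq_or_lt with rfl | hb
      · simpa [show a = 1 by linarith] using hy₁
      · exact key y₁ hy₁ y₂ h₂ a b ha hb hab
  have hhull : convexHull ℝ B ⊆ H :=
    convexHull_min (fun y hy => (eq_or_ne y x).imp id (hlt y hy)) hconv
  refine ⟨subset_convexHull ℝ B hx, fun x₁ hx₁ x₂ hx₂ ⟨a, b, ha, hb, hab, hcomb⟩ => ?_⟩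
  refine (hhull hx₁).resolve_right fun h₁ => ?_
  have hl : a * l x₁ + b * l x₂ = l x := by rw [← hcomb]; simp
  linarith [mul_lt_mul_of_pos_left (show l x₁ < l x from h₁) ha,
    mul_le_mul_of_nonneg_left (hH x₂ (hhull hx₂)) hb.le, congrArg (· * l x) hab]

def height (K : ℕ) : ℤ × ℤ →+ ℤ :=
  (K : ℤ) • AddMonoidHom.fst ℤ ℤ + AddMonoidHom.snd ℤ ℤ

@[simp]
theorem height_apply (K : ℕ) (q : ℤ × ℤ) : height K q = K * q.1 + q.2 := by
  simp [height]

theorem exists_forall_height_lt (S : Finset (ℤ × ℤ)) (hS : S.Nonempty) :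
    ∃ K : ℕ, ∃ x ∈ S, ∀ s ∈ S, s ≠ x → height K s < height K x := by
  obtain ⟨x, hx, hmax⟩ := S.exists_max_image toLex hS
  set K := ∑ s ∈ S, (x.2 - s.2).natAbs + 1
  refine ⟨K, x, hx, fun s hs hsx => ?_⟩
  have hK : |x.2 - s.2| < K := by
    rw [Int.abs_eq_natAbs]
    exact_mod_cast Nat.lt_succ_of_le
      (Finset.single_le_sum (f := fun s => (x.2 - s.2).natAbs) (fun _ _ => Nat.zero_le _) hs)
  simp only [height_apply]
  rcases Prod.Lex.toLex_lt_toLex.mp (lt_of_le_of_ne (hmax s hs) (by simpa using hsx))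
    with h | ⟨h₁, h₂⟩
  · nlinarith [neg_abs_le (x.2 - s.2), mul_le_mul_of_nonneg_left (show s.1 + 1 ≤ x.1 by omega)
      (Int.natCast_nonneg K)]
  · rw [h₁]
    linarith

theorem isExtremePt_of_forall_height_lt {S : Finset (ℤ × ℤ)} {x : ℤ × ℤ} (hx : x ∈ S) (K : ℕ)
    (hlt : ∀ s ∈ S, s ≠ x → height K s < height K x) : IsExtremePt S x := by
  refine mem_extremePoints_convexHull_of_forall_lt
    ((K : ℝ) • LinearMap.fst ℝ ℝ ℝ + LinearMap.snd ℝ ℝ ℝ) ⟨x, hx, rfl⟩ ?_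
  rintro _ ⟨s, hs, rfl⟩ hsx
  have h := hlt s hs (by rintro rfl; exact hsx rfl)
  simp only [height_apply] at h
  simpa [e] using (by exact_mod_cast h : ((K * s.1 + s.2 : ℤ) : ℝ) < ((K * x.1 + x.2 : ℤ) : ℝ))

section Subshift

variable {A : Type*}

/-- The subshift `X_S(η)`. -/
def subshift (η : ℤ × ℤ → A) (S : Finset (ℤ × ℤ)) : Set (ℤ × ℤ → A) :=
  {f | ∀ u, ∃ v, ∀ x ∈ S, f (x + u) = η (x + v)}

def patterns (X : Set (ℤ × ℤ → A)) (N : ℕ) : Set (Fin N × Fin N → A) :=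
  {w | ∃ f ∈ X, ∃ u : ℤ × ℤ, ∀ p : Fin N × Fin N, w p = f (u + (((p.1 : ℕ) : ℤ), ((p.2 : ℕ) : ℤ)))}

theorem subshift_anti {η : ℤ × ℤ → A} {S S' : Finset (ℤ × ℤ)} (h : S ⊆ S') :
    subshift η S' ⊆ subshift η S :=
  fun _ hf u => (hf u).imp fun _ hv x hx => hv x (h hx)

theorem add_left_mem_subshift {η : ℤ × ℤ → A} {S : Finset (ℤ × ℤ)} {f : ℤ × ℤ → A}
    (hf : f ∈ subshift η S) (u : ℤ × ℤ) : (fun q => f (u + q)) ∈ subshift η S := by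
  intro u'
  obtain ⟨v, hv⟩ := hf (u' + u)
  exact ⟨v, fun x hx => (congrArg f (by abel)).trans (hv x hx)⟩

theorem patterns_mono {X Y : Set (ℤ × ℤ → A)} (h : X ⊆ Y) (N : ℕ) : patterns X N ⊆ patterns Y N :=
  fun _ ⟨f, hf, hu⟩ => ⟨f, h hf, hu⟩

theorem Generated.eq_of_forall_eq {η : ℤ × ℤ → A} {S : Finset (ℤ × ℤ)} {x : ℤ × ℤ}
    (hgen : Generated η S x) (hx : x ∈ S) {f f' : ℤ × ℤ → A} (hf : f ∈ subshift η S)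
    (hf' : f' ∈ subshift η S) (p : ℤ × ℤ)
    (h : ∀ s ∈ S.erase x, f (p + (s - x)) = f' (p + (s - x))) : f p = f' p := by
  obtain ⟨v, hv⟩ := hf (p - x)
  obtain ⟨v', hv'⟩ := hf' (p - x)
  have hshift : ∀ s : ℤ × ℤ, s + (p - x) = p + (s - x) := fun s => by abel
  have hres : res (eraseSub S x) (pat η S v') = pat η (S.erase x) v := funext fun s => by
    have hs := Finset.mem_of_mem_erase s.2
    simp only [res, pat, ← hv s hs, ← hv' s hs, hshift, h s s.2]
  obtain ⟨_, _, huniq⟩ := hgen _ ⟨v, rfl⟩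
  have hvv' := congrFun ((huniq _ ⟨⟨v, rfl⟩, rfl⟩).trans (huniq _ ⟨⟨v', rfl⟩, hres⟩).symm) ⟨x, hx⟩
  simp only [pat] at hvv'
  rw [← hv x hx, ← hv' x hx, add_sub_cancel] at hvv'
  exact hvv'

/-- Induction on `φ p`: each dependency `p + d` is lower by between `1` and `W`, so it stays
above the strip, and moves horizontally by at most `r`, which the slope `r` of the cone absorbs. -/
theorem eq_of_eqOn_strip (φ : ℤ × ℤ →+ ℤ) {D : Finset (ℤ × ℤ)} {W r : ℕ}
    (hφ : ∀ d ∈ D, -(W : ℤ) ≤ φ d ∧ φ d < 0) (hr : ∀ d ∈ D, |d.1| ≤ r)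
    {g g' : ℤ × ℤ → A} (hstep : ∀ p, (∀ d ∈ D, g (p + d) = g' (p + d)) → g p = g' p)
    {G R : ℤ} (hstrip : ∀ q, 0 ≤ φ q → φ q < W → |q.1| ≤ R + r * G → g q = g' q)
    (p : ℤ × ℤ) (h₀ : 0 ≤ φ p) (hG : φ p ≤ G) (hp : |p.1| ≤ R + r * (G - φ p)) :
    g p = g' p := by
  induction hn : (φ p).toNat using Nat.strong_induction_on generalizing p with
  | _ n ih =>
  by_cases hW : φ p < W
  · exact hstrip p h₀ hW (hp.trans (by nlinarith [Int.natCast_nonneg r]))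
  refine hstep p fun d hd => ?_
  obtain ⟨hdW, hd₀⟩ := hφ d hd
  have hadd : φ (p + d) = φ p + φ d := map_add φ p d
  refine ih _ (by omega) (p + d) (by omega) (by omega) ?_ rfl
  calc |(p + d).1| ≤ |p.1| + |d.1| := abs_add_le _ _
    _ ≤ R + r * (G - φ p) + r := add_le_add hp (hr d hd)
    _ ≤ R + r * (G - φ (p + d)) := by rw [hadd]; nlinarith [Int.natCast_nonneg r]

theorem ncard_patterns_le [Finite A] {X : Set (ℤ × ℤ → A)} (T : Finset (ℤ × ℤ)) (N : ℕ)
    (hT : ∀ f ∈ X, ∀ f' ∈ X, ∀ u u' : ℤ × ℤ, (∀ q ∈ T, f (u + q) = f' (u' + q)) →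
      ∀ p : Fin N × Fin N, f (u + (((p.1 : ℕ) : ℤ), ((p.2 : ℕ) : ℤ))) =
        f' (u' + (((p.1 : ℕ) : ℤ), ((p.2 : ℕ) : ℤ)))) :
    (patterns X N).ncard ≤ Nat.card A ^ T.card := by
  choose f hf u hu using fun w : patterns X N => w.2
  have hinj : Function.Injective fun w : patterns X N => fun q : T => f w (u w + q) :=
    fun w w' hww' => Subtype.ext <| funext fun p => by
      rw [hu w p, hu w' p]
      exact hT _ (hf w) _ (hf w') _ _ (fun q hq => congrFun hww' ⟨q, hq⟩) p
  calc (patterns X N).ncard = Nat.card (patterns X N) := (Nat.card_coe_set_eq _).symm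
    _ ≤ Nat.card (T → A) := Nat.card_le_card_of_injective _ hinj
    _ = Nat.card A ^ T.card := by simp [Nat.card_fun]

end Subshift

/-- The points `q` with `0 ≤ height K q < W` and `|q.1| ≤ R`, parametrised by
`(height K q, q.1)`. -/
noncomputable def strip (K W R : ℕ) : Finset (ℤ × ℤ) :=
  (Finset.Ico (0 : ℤ) W ×ˢ Finset.Icc (-(R : ℤ)) R).image fun hq => (hq.2, hq.1 - K * hq.2)

theorem mem_strip {K W R : ℕ} {q : ℤ × ℤ} (h₀ : 0 ≤ height K q) (hW : height K q < W)
    (hR : |q.1| ≤ R) : q ∈ strip K W R := by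
  rw [height_apply] at h₀ hW
  exact Finset.mem_image.2 ⟨(height K q, q.1), by simp [abs_le.1 hR, h₀, hW], by simp⟩

theorem card_strip_le (K W R : ℕ) : (strip K W R).card ≤ W * (2 * R + 1) :=
  Finset.card_image_le.trans <| by
    rw [Finset.card_product, Int.card_Ico, Int.card_Icc]
    exact le_of_eq (by congr 1; omega)

theorem Generated.eq_on_square_of_eqOn_strip {A : Type*} {η : ℤ × ℤ → A} {S : Finset (ℤ × ℤ)}
    {x : ℤ × ℤ} (hgen : Generated η S x) (hx : x ∈ S) {K W r : ℕ}
    (hlt : ∀ s ∈ S, s ≠ x → height K s < height K x)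
    (hW : ∀ s ∈ S, height K x - height K s ≤ W) (hr : ∀ s ∈ S, |s.1 - x.1| ≤ r)
    {f f' : ℤ × ℤ → A} (hf : f ∈ subshift η S) (hf' : f' ∈ subshift η S) {u u' : ℤ × ℤ} {N : ℕ}
    (hT : ∀ q ∈ strip K W (N + r * ((K + 1) * N)), f (u + q) = f' (u' + q))
    (p : Fin N × Fin N) :
    f (u + (((p.1 : ℕ) : ℤ), ((p.2 : ℕ) : ℤ))) = f' (u' + (((p.1 : ℕ) : ℤ), ((p.2 : ℕ) : ℤ))) := by
  set D := (S.erase x).image (· - x)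
  have hDφ : ∀ d ∈ D, -(W : ℤ) ≤ height K d ∧ height K d < 0 := by
    simp only [D, Finset.forall_mem_image, map_sub]
    intro s hs
    have := hlt s (Finset.mem_of_mem_erase hs) (Finset.ne_of_mem_erase hs)
    have := hW s (Finset.mem_of_mem_erase hs)
    constructor <;> linarith
  have hDr : ∀ d ∈ D, |d.1| ≤ r := by
    simp only [D, Finset.forall_mem_image, Prod.fst_sub]
    exact fun s hs => hr s (Finset.mem_of_mem_erase hs)
  have hstep (q : ℤ × ℤ) (h : ∀ d ∈ D, f (u + (q + d)) = f' (u' + (q + d))) :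
      f (u + q) = f' (u' + q) :=
    hgen.eq_of_forall_eq hx (add_left_mem_subshift hf u) (add_left_mem_subshift hf' u') q
      fun s hs => h _ (Finset.mem_image_of_mem _ hs)
  have hp₁ : (0 : ℤ) ≤ (p.1 : ℕ) ∧ ((p.1 : ℕ) : ℤ) < N := ⟨by positivity, by exact_mod_cast p.1.2⟩
  have hG : K * ((p.1 : ℕ) : ℤ) + (p.2 : ℕ) ≤ (K + 1) * N := by
    have : ((p.2 : ℕ) : ℤ) < N := by exact_mod_cast p.2.2
    nlinarith [mul_le_mul_of_nonneg_left hp₁.2.le (Int.natCast_nonneg K)]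
  refine eq_of_eqOn_strip (height K) hDφ hDr (g := fun q => f (u + q))
    (g' := fun q => f' (u' + q)) hstep (G := (K + 1) * N) (R := N)
    (fun q h₀ hq hq₁ => hT q (mem_strip h₀ hq (by push_cast; exact hq₁))) _ ?_ ?_ ?_
    <;> simp only [height_apply]
  · positivity
  · exact hG
  · rw [abs_of_nonneg hp₁.1]
    linarith [mul_nonneg (Int.natCast_nonneg r) (sub_nonneg.2 hG)]

theorem exists_ncard_patterns_le_pow {A : Type*} [Finite A] {η : ℤ × ℤ → A}
    {S : Finset (ℤ × ℤ)} (hS : WeakGenerating η S) :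
    ∃ C : ℕ, ∀ N ≥ 1, (patterns (subshift η S) N).ncard ≤ Nat.card A ^ (C * N) := by
  obtain ⟨hne, -, hext⟩ := hS
  obtain ⟨K, x, hx, hlt⟩ := exists_forall_height_lt S hne
  have hgen := hext x hx (isExtremePt_of_forall_height_lt hx K hlt)
  obtain ⟨W, hW⟩ := exists_nat_forall_le S fun s => height K x - height K s
  obtain ⟨r, hr⟩ := exists_nat_forall_le S fun s => |s.1 - x.1|
  have : Nonempty A := ⟨η 0⟩
  refine ⟨W * (2 * (1 + r * (K + 1)) + 1), fun N hN => ?_⟩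
  calc (patterns (subshift η S) N).ncard
      ≤ Nat.card A ^ (strip K W (N + r * ((K + 1) * N))).card :=
        ncard_patterns_le _ N fun f hf f' hf' u u' hT =>
          hgen.eq_on_square_of_eqOn_strip hx hlt hW hr hf hf' hT
    _ ≤ Nat.card A ^ (W * (2 * (1 + r * (K + 1)) + 1) * N) :=
      pow_le_pow_right₀ Nat.card_pos ((card_strip_le _ _ _).trans (by nlinarith))

theorem tendsto_log_div_sq_of_le_pow {P : ℕ → ℕ} {b C : ℕ} (hP : ∀ N, 1 ≤ P N)
    (hle : ∀ N ≥ 1, P N ≤ b ^ (C * N)) :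
    Tendsto (fun N => Real.log (P N) / (N : ℝ) ^ 2) atTop (𝓝 0) := by
  refine squeeze_zero' (Eventually.of_forall fun N => div_nonneg
    (Real.log_nonneg (by exact_mod_cast hP N)) (sq_nonneg _)) ?_
    (tendsto_const_div_atTop_nhds_zero_nat (C * Real.log b))
  filter_upwards [eventually_ge_atTop 1] with N hN
  have hN₀ : (0 : ℝ) < N := by exact_mod_cast hN
  have hlog : Real.log (P N) ≤ C * N * Real.log b := by
    calc Real.log (P N) ≤ Real.log ((b : ℝ) ^ (C * N)) :=
          Real.log_le_log (by exact_mod_cast hP N) (by exact_mod_cast hle N hN)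
      _ = C * N * Real.log b := by rw [Real.log_pow]; push_cast; ring
  rw [div_le_div_iff₀ (by positivity) hN₀]
  nlinarith

/-- If `η` admits an `η`-generating set `S` and `S' ⊇ S` is finite, then the
`ℤ²`-subshift of finite type generated by the `S'`-words of `η` has
topological entropy zero: `(1/N²) log P(N,N) → 0`, where `P(N,N)` counts the
`N × N` patterns occurring in elements of `X_{S'}(η)`. -/
theorem statement10 {A : Type*} [Finite A] (η : ℤ × ℤ → A)
    (S S' : Finset (ℤ × ℤ)) (hS : Generating η S) (hSS' : S ⊆ S') :
    Filter.Tendsto (fun N : ℕ =>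
      Real.log (Set.ncard {w : Fin N × Fin N → A | ∃ f : ℤ × ℤ → A,
          (∀ u : ℤ × ℤ, ∃ v : ℤ × ℤ, ∀ x ∈ S', f (x + u) = η (x + v)) ∧
          ∃ u : ℤ × ℤ, ∀ p : Fin N × Fin N,
            w p = f (u + (((p.1 : ℕ) : ℤ), ((p.2 : ℕ) : ℤ)))}) / (N : ℝ) ^ 2)
      Filter.atTop (nhds 0) := by
  obtain ⟨C, hC⟩ := exists_ncard_patterns_le_pow hS.1
  refine tendsto_log_div_sq_of_le_pow (P := fun N => (patterns (subshift η S') N).ncard)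
    (b := Nat.card A) (C := C) (fun N => ?_) fun N hN => ?_
  · exact (Set.ncard_pos (Set.toFinite _)).2
      ⟨_, η, fun u => ⟨u, fun _ _ => rfl⟩, 0, fun _ => rfl⟩
  · exact (Set.ncard_le_ncard (patterns_mono (subshift_anti hSS') N) (Set.toFinite _)).trans
      (hC N hN)

end Nivat
end

section
/- (Fine–Wilf, sharpness) For each n ∈ ℕ, there exists a finite word w of length 2n+1 over {0,1} that admits two distinct extensions to periodic sequences ℕ → {0,1}, one of period n+1 and one of period n+2. In particular, 2p−2 consecutive entries are necessary in general to determine a sequence of period at most p = n+2. -/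
/-!
Take for `f` and `g` the sequences that are `1` exactly at the positions `≡ n` modulo `n + 1`,
respectively modulo `n + 2`. On `0, …, 2n` both moduli see only one such position, namely `n`,
so both restrict to `0^n 1 0^n`; at position `2n + 1 = n + (n + 1)` they first differ.
-/

def periodicPulse (p k : ℕ) (i : ℕ) : Fin 2 :=
  if i % p = k then 1 else 0

theorem periodicPulse_periodic (p k : ℕ) : Function.Periodic (periodicPulse p k) p := by
  intro i
  simp [periodicPulse]

theorem Nat.mod_eq_iff_eq_of_lt_add {i p k : ℕ} (hk : k < p) (hi : i < p + k) :
    i % p = k ↔ i = k := by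
  rcases Nat.lt_or_ge i p with hip | hpi
  · rw [Nat.mod_eq_of_lt hip]
  · rw [Nat.mod_eq_sub_mod hpi, Nat.mod_eq_of_lt (by omega)]
    omega

theorem periodicPulse_of_lt_add {i p k : ℕ} (hk : k < p) (hi : i < p + k) :
    periodicPulse p k i = if i = k then 1 else 0 := by
  simp only [periodicPulse, Nat.mod_eq_iff_eq_of_lt_add hk hi]

/-- **Sharpness of the Fine–Wilf bound.** For each `n`, the word
`w = 0^n 1 0^n` of length `2n+1` admits two distinct extensions to periodic
sequences `ℕ → {0,1}`, one of period `n+1` and one of period `n+2`. -/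
theorem fine_wilf_sharp (n : ℕ) :
    ∃ f g : ℕ → Fin 2, f ≠ g ∧
      (∀ i : ℕ, f (i + (n + 1)) = f i) ∧
      (∀ i : ℕ, g (i + (n + 2)) = g i) ∧
      (∀ i : ℕ, i < 2 * n + 1 → f i = g i) ∧
      (∀ i : ℕ, i < 2 * n + 1 → f i = if i = n then 1 else 0) := by
  refine ⟨periodicPulse (n + 1) n, periodicPulse (n + 2) n, ?_, periodicPulse_periodic _ _,
    periodicPulse_periodic _ _, fun i hi => ?_,
    fun i hi => periodicPulse_of_lt_add (by omega) (by omega)⟩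
  · intro hfg
    have h := congrFun hfg (n + (n + 1))
    rw [periodicPulse_periodic, periodicPulse_of_lt_add (by omega) (by omega),
      periodicPulse_of_lt_add (by omega) (by omega)] at h
    simp at h
  · rw [periodicPulse_of_lt_add (p := n + 1) (by omega) (by omega),
      periodicPulse_of_lt_add (p := n + 2) (by omega) (by omega)]
end
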